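/- arXiv:1504.08107 — 5 statements merged into one kernel-verified Lean document; each statement's English description precedes it below -/
import Mathlib

section
/- Let $G$ be a 2-connected graph on at least 3 vertices and let $x \in V(G)$. Then there exists an edge $xy \in E(G)$ incident to $x$ such that the graph $G/xy$ obtained by contracting $xy$ is 2-connected (or is isomorphic to $K_2$). -/
/-- A graph is 2-connected: at least 3 vertices, connected, and no cut vertex. -/
def TwoConnected {V : Type*} [Fintype V] (G : SimpleGraph V) : Prop :=
  3 ≤ Fintype.card V ∧ G.Connected ∧
    ∀ v : V, (((⊤ : G.Subgraph).deleteVerts {v}).coe.Connected)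

/-- The graph obtained from `G` by contracting the edge `xy` (identifying `y`
into `x`, removing loops and multiple edges). -/
def contractEdge {V : Type*} [DecidableEq V] (G : SimpleGraph V) (x y : V) :
    SimpleGraph {z : V // z ≠ y} where
  Adj a b := a ≠ b ∧ (G.Adj a b ∨ (a.1 = x ∧ G.Adj y b) ∨ (b.1 = x ∧ G.Adj y a))
  symm := by
    constructor
    rintro a b ⟨hne, h⟩
    refine ⟨hne.symm, ?_⟩
    rcases h with h | ⟨h1, h2⟩ | ⟨h1, h2⟩
    · exact Or.inl h.symm
    · exact Or.inr (Or.inr ⟨h1, h2⟩)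
    · exact Or.inr (Or.inl ⟨h1, h2⟩)
  loopless := ⟨fun a h => h.1 rfl⟩

/-!
Fix `x`. Among the pairs `(y, w)` with `y` a neighbour of `x` and `w ∉ {x, y}`, choose one for
which the component `C` of `w` in `G - x - y` is largest. If `G - x - y` had another component
`D`, then, as `G - y` is connected, `x` has a neighbour `s ∈ D`; as `G - x` is connected, `y` has
a neighbour in `C`, so `C ∪ {y}` lies in a single component of `G - x - s`, which is larger than
`C`. Hence `G - x - y` is connected. Contracting `xy` then keeps the graph connected, and deleting
the merged vertex leaves `G - x - y`, while deleting any other vertex `v` leaves a contraction of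
`G - v`; both are connected.
-/

namespace SimpleGraph

variable {V W : Type*} {G : SimpleGraph V} {H : SimpleGraph W}

theorem Preconnected.of_surjective_of_adj {f : V → W} (hG : G.Preconnected)
    (hf : Function.Surjective f)
    (hadj : ∀ ⦃a b⦄, G.Adj a b → f a = f b ∨ H.Adj (f a) (f b)) :
    H.Preconnected := by
  have hreach : ∀ ⦃a b⦄, G.Reachable a b → H.Reachable (f a) (f b) := by
    intro a b hab
    rw [reachable_iff_reflTransGen] at hab ⊢
    refine Relation.ReflTransGen.lift' f (fun a b h => ?_) _ _ hab
    rcases hadj h with heq | h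
    · rw [Function.onFun, heq]
    · exact Relation.ReflTransGen.single h
  intro u v
  obtain ⟨a, rfl⟩ := hf u
  obtain ⟨b, rfl⟩ := hf v
  exact hreach (hG a b)

theorem Connected.of_surjective_of_adj {f : V → W} (hG : G.Connected)
    (hf : Function.Surjective f)
    (hadj : ∀ ⦃a b⦄, G.Adj a b → f a = f b ∨ H.Adj (f a) (f b)) :
    H.Connected :=
  (connected_iff _).2 ⟨hG.preconnected.of_surjective_of_adj hf hadj, hG.nonempty.map f⟩

theorem Connected.induce_image {f : V → W} {s : Set V} (hs : (G.induce s).Connected)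
    (hadj : ∀ ⦃a b⦄, G.Adj a b → f a = f b ∨ H.Adj (f a) (f b)) :
    (H.induce (f '' s)).Connected :=
  hs.of_surjective_of_adj Set.imageFactorization_surjective fun _ _ h => by
    simpa [Subtype.ext_iff, Set.imageFactorization] using hadj h

theorem Connected.adj_of_card_eq_two [Fintype V] (hG : G.Connected) (hV : Fintype.card V = 2)
    {a b : V} (hab : a ≠ b) : G.Adj a b := by
  obtain ⟨p⟩ := hG.preconnected a b
  have hsnd : G.Adj a p.snd := p.adj_snd (p.not_nil_of_ne hab)
  suffices p.snd = b from this ▸ hsnd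
  by_contra hb
  have := Fintype.two_lt_card_iff.2 ⟨a, b, p.snd, hab, hsnd.ne, Ne.symm hb⟩
  omega

theorem connected_deleteVerts_iff {s : Set V} :
    ((⊤ : G.Subgraph).deleteVerts s).coe.Connected ↔ (G.induce sᶜ).Connected := by
  rw [Set.compl_eq_univ_sdiff, connected_induce_iff, Subgraph.connected_iff']
  exact Iff.rfl

def ReachableWithin (G : SimpleGraph V) (s : Set V) (u v : V) : Prop :=
  ∃ p : G.Walk u v, ∀ z ∈ p.support, z ∈ s

namespace ReachableWithin

variable {s t : Set V} {u v w : V}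

theorem refl (hu : u ∈ s) : G.ReachableWithin s u u :=
  ⟨.nil, by simpa using hu⟩

theorem symm (h : G.ReachableWithin s u v) : G.ReachableWithin s v u := by
  obtain ⟨p, hp⟩ := h
  exact ⟨p.reverse, fun z hz => hp z (by simpa using hz)⟩

theorem trans (h : G.ReachableWithin s u v) (h' : G.ReachableWithin s v w) :
    G.ReachableWithin s u w := by
  obtain ⟨p, hp⟩ := h
  obtain ⟨q, hq⟩ := h'
  exact ⟨p.append q, fun z hz => (Walk.mem_support_append_iff p q).1 hz |>.elim (hp z) (hq z)⟩

theorem mem_left (h : G.ReachableWithin s u v) : u ∈ s :=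
  h.elim fun p hp => hp u p.start_mem_support

theorem mem_right (h : G.ReachableWithin s u v) : v ∈ s :=
  h.elim fun p hp => hp v p.end_mem_support

theorem mono (hst : s ⊆ t) (h : G.ReachableWithin s u v) : G.ReachableWithin t u v :=
  h.elim fun p hp => ⟨p, fun z hz => hst (hp z hz)⟩

theorem adj_left (huv : G.Adj u v) (hu : u ∈ s) (h : G.ReachableWithin s v w) :
    G.ReachableWithin s u w := by
  obtain ⟨p, hp⟩ := h
  exact ⟨.cons huv p, by simpa [hu] using hp⟩

/-- A walk inside `s` never leaves the component of `s` it starts in. -/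
theorem mono_of_forall (h : G.ReachableWithin s u v)
    (ht : ∀ z, G.ReachableWithin s u z → z ∈ t) : G.ReachableWithin t u v := by
  classical
  obtain ⟨p, hp⟩ := h
  refine ⟨p, fun z hz => ht z ⟨p.takeUntil z hz, fun z' hz' => hp z' ?_⟩⟩
  exact p.support_takeUntil_subset_support hz hz'

theorem exists_adj_of_ne (h : G.ReachableWithin s u v) (huv : u ≠ v) :
    ∃ t, G.Adj u t ∧ G.ReachableWithin (s \ {u}) t v := by
  classical
  obtain ⟨p, hp⟩ := h
  obtain ⟨q, hq, hsub⟩ : ∃ q : G.Walk u v, q.IsPath ∧ q.support ⊆ p.support :=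
    ⟨p.bypass, p.bypass_isPath, p.support_bypass_subset_support⟩
  cases q with
  | nil => exact absurd rfl huv
  | cons hadj q =>
    rw [Walk.cons_isPath_iff] at hq
    refine ⟨_, hadj, q, fun z hz => ⟨hp z (hsub (by simp [hz])), ?_⟩⟩
    rintro rfl
    exact hq.2 hz

end ReachableWithin

theorem reachable_induce_iff {s : Set V} {u v : V} (hu : u ∈ s) (hv : v ∈ s) :
    (G.induce s).Reachable ⟨u, hu⟩ ⟨v, hv⟩ ↔ G.ReachableWithin s u v := by
  constructor
  · rintro ⟨p⟩
    have hp : ∀ z ∈ (p.map (Embedding.induce s).toHom).support, z ∈ s := by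
      intro z hz
      rw [Walk.support_map, List.mem_map] at hz
      obtain ⟨z, -, rfl⟩ := hz
      exact z.2
    exact ⟨_, hp⟩
  · rintro ⟨p, hp⟩
    exact ⟨p.induce s hp⟩

theorem connected_induce_iff_reachableWithin {s : Set V} :
    (G.induce s).Connected ↔
      s.Nonempty ∧ ∀ u ∈ s, ∀ v ∈ s, G.ReachableWithin s u v := by
  rw [connected_iff, Set.nonempty_coe_sort, and_comm]
  refine and_congr_right fun _ => ⟨fun h u hu v hv => ?_, fun h u v => ?_⟩
  · exact (reachable_induce_iff hu hv).1 (h _ _)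
  · exact (reachable_induce_iff u.2 v.2).2 (h u u.2 v v.2)

end SimpleGraph

open SimpleGraph

section TwoConnected

variable {V : Type*} {G : SimpleGraph V}

theorem TwoConnected.connected_induce_compl_singleton [Fintype V] (h : TwoConnected G)
    (v : V) : (G.induce {v}ᶜ).Connected :=
  connected_deleteVerts_iff.1 (h.2.2 v)

theorem exists_adj_reachableWithin_ssubset {x y u w : V} (hx : (G.induce {x}ᶜ).Connected)
    (hy : (G.induce {y}ᶜ).Connected) (hxy : G.Adj x y) (hw : w ∈ ({x, y} : Set V)ᶜ)
    (hu : u ∈ ({x, y} : Set V)ᶜ) (hwu : ¬ G.ReachableWithin {x, y}ᶜ w u) :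
    ∃ s, G.Adj x s ∧ y ∈ ({x, s} : Set V)ᶜ ∧
      {z | G.ReachableWithin {x, y}ᶜ w z} ⊂ {z | G.ReachableWithin {x, s}ᶜ y z} := by
  simp only [Set.mem_compl_iff, Set.mem_insert_iff, Set.mem_singleton_iff, not_or] at hw hu
  have hG_y := (connected_induce_iff_reachableWithin.1 hy).2
  have hG_x := (connected_induce_iff_reachableWithin.1 hx).2
  obtain ⟨s, hxs, hsu⟩ := (hG_y x hxy.ne u hu.2).exists_adj_of_ne (Ne.symm hu.1)
  replace hsu := hsu.mono (t := {x, y}ᶜ) fun z => by simp +contextual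
  obtain ⟨t, hyt, htw⟩ := (hG_x y hxy.ne.symm w hw.1).exists_adj_of_ne (Ne.symm hw.2)
  replace htw := htw.mono (t := {x, y}ᶜ) fun z => by simp +contextual
  have hws : ¬ G.ReachableWithin {x, y}ᶜ w s := fun h => hwu (h.trans hsu)
  have hys : y ∈ ({x, s} : Set V)ᶜ := by
    have hs := hsu.mem_left
    simp only [Set.mem_compl_iff, Set.mem_insert_iff, Set.mem_singleton_iff, not_or] at hs ⊢
    exact ⟨hxy.ne.symm, Ne.symm hs.2⟩
  have hsub : {z | G.ReachableWithin {x, y}ᶜ w z} ⊆ {z | G.ReachableWithin {x, s}ᶜ y z} := by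
    intro z hz
    refine .adj_left hyt hys ((htw.trans hz).mono_of_forall fun z' hz' => ?_)
    have hz'xy := hz'.mem_right
    have hz's : z' ≠ s := by rintro rfl; exact hws (htw.symm.trans hz')
    simp only [Set.mem_compl_iff, Set.mem_insert_iff, Set.mem_singleton_iff, not_or] at hz'xy ⊢
    exact ⟨hz'xy.1, hz's⟩
  refine ⟨s, hxs, hys, (Set.ssubset_iff_of_subset hsub).2 ⟨y, .refl hys, fun h => ?_⟩⟩
  exact h.mem_right (by simp)

theorem TwoConnected.exists_adj_connected_induce_compl_pair [Fintype V] (h : TwoConnected G)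
    (x : V) : ∃ y, G.Adj x y ∧ (G.induce {x, y}ᶜ).Connected := by
  classical
  let P : Set (V × V) := {p | G.Adj x p.1 ∧ p.2 ∈ ({x, p.1} : Set V)ᶜ}
  let m (p : V × V) : ℕ := Set.ncard {z | G.ReachableWithin {x, p.1}ᶜ p.2 z}
  have hP : P.Nonempty := by
    have : Nontrivial V := Fintype.one_lt_card_iff_nontrivial.1 (by have := h.1; omega)
    obtain ⟨y, hxy⟩ := h.2.1.preconnected.exists_adj_of_nontrivial x
    have hcard : ({x, y} : Finset V).card < (Finset.univ : Finset V).card := by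
      rw [Finset.card_univ]
      exact Finset.card_le_two.trans_lt h.1
    obtain ⟨w, -, hw⟩ := Finset.exists_mem_notMem_of_card_lt_card hcard
    exact ⟨(y, w), hxy, by simpa using hw⟩
  obtain ⟨⟨y, w⟩, ⟨hxy, hw⟩, hmax⟩ := P.exists_max_image m P.toFinite hP
  have hreach : ∀ u ∈ ({x, y} : Set V)ᶜ, G.ReachableWithin {x, y}ᶜ w u := by
    intro u hu
    by_contra hwu
    obtain ⟨s, hxs, hys, hlt⟩ := exists_adj_reachableWithin_ssubset
      (h.connected_induce_compl_singleton x) (h.connected_induce_compl_singleton y) hxy hw hu hwu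
    exact (hmax (s, y) ⟨hxs, hys⟩).not_gt (Set.ncard_lt_ncard hlt)
  exact ⟨y, hxy, connected_induce_iff_reachableWithin.2
    ⟨⟨w, hw⟩, fun u hu v hv => (hreach u hu).symm.trans (hreach v hv)⟩⟩

end TwoConnected

section Contraction

variable {V : Type*} [DecidableEq V] {G : SimpleGraph V} {x y : V}

def contractEdgeProj (hxy : x ≠ y) (z : V) : {z : V // z ≠ y} :=
  if h : z = y then ⟨x, hxy⟩ else ⟨z, h⟩

theorem contractEdgeProj_of_ne (hxy : x ≠ y) {z : V} (hz : z ≠ y) :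
    contractEdgeProj hxy z = ⟨z, hz⟩ :=
  dif_neg hz

theorem contractEdgeProj_self (hxy : x ≠ y) : contractEdgeProj hxy y = ⟨x, hxy⟩ :=
  dif_pos rfl

theorem contractEdgeProj_surjective (hxy : x ≠ y) : Function.Surjective (contractEdgeProj hxy) :=
  fun z => ⟨z, contractEdgeProj_of_ne hxy z.2⟩

theorem contractEdgeProj_adj (hxy : x ≠ y) {a b : V} (hab : G.Adj a b) :
    contractEdgeProj hxy a = contractEdgeProj hxy b ∨
      (contractEdge G x y).Adj (contractEdgeProj hxy a) (contractEdgeProj hxy b) := by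
  refine or_iff_not_imp_left.2 fun hne => ⟨hne, ?_⟩
  by_cases ha : a = y <;> by_cases hb : b = y
  · exact absurd (ha.trans hb.symm) hab.ne
  · subst ha
    simp [contractEdgeProj_self, contractEdgeProj_of_ne hxy hb, hab]
  · subst hb
    simp [contractEdgeProj_self, contractEdgeProj_of_ne hxy ha, hab.symm]
  · simp only [contractEdgeProj_of_ne hxy ha, contractEdgeProj_of_ne hxy hb, hab, true_or]

theorem preimage_contractEdgeProj_merged (hxy : x ≠ y) :
    contractEdgeProj hxy ⁻¹' {⟨x, hxy⟩} = {x, y} := by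
  ext z
  by_cases hz : z = y
  · simp [hz, contractEdgeProj_self]
  · simp [hz, contractEdgeProj_of_ne hxy hz, Subtype.ext_iff]

theorem preimage_contractEdgeProj_of_ne (hxy : x ≠ y) {w : {z : V // z ≠ y}} (hw : w.1 ≠ x) :
    contractEdgeProj hxy ⁻¹' {w} = {w.1} := by
  ext z
  by_cases hz : z = y
  · simp [hz, contractEdgeProj_self, Subtype.ext_iff, Ne.symm hw, Ne.symm w.2]
  · simp [contractEdgeProj_of_ne hxy hz, Subtype.ext_iff]

theorem connected_contractEdge (hG : G.Connected) (hxy : x ≠ y) :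
    (contractEdge G x y).Connected :=
  hG.of_surjective_of_adj (contractEdgeProj_surjective hxy) fun _ _ => contractEdgeProj_adj hxy

theorem connected_induce_compl_contractEdge (hxy : x ≠ y) (w : {z : V // z ≠ y})
    (hw : (G.induce (contractEdgeProj hxy ⁻¹' {w})ᶜ).Connected) :
    ((contractEdge G x y).induce {w}ᶜ).Connected := by
  have := hw.induce_image (fun _ _ => contractEdgeProj_adj hxy)
  rwa [← Set.preimage_compl, Set.image_preimage_eq _ (contractEdgeProj_surjective hxy)] at this

end Contraction

/-- Every 2-connected graph on at least 3 vertices has, at each vertex `x`, an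
incident edge `xy` whose contraction is biconnected (2-connected or `K₂`). -/
theorem exists_contractible_edge {V : Type*} [Fintype V] [DecidableEq V]
    (G : SimpleGraph V) (h2c : TwoConnected G) (x : V) :
    ∃ y : V, G.Adj x y ∧
      (TwoConnected (contractEdge G x y) ∨
        (Fintype.card {z : V // z ≠ y} = 2 ∧
          ∀ a b : {z : V // z ≠ y}, a ≠ b → (contractEdge G x y).Adj a b)) := by
  obtain ⟨y, hxy, hG_xy⟩ := h2c.exists_adj_connected_induce_compl_pair x
  have hcard : Fintype.card {z : V // z ≠ y} = Fintype.card V - 1 := by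
    simp [Fintype.card_subtype_compl]
  have hconn := connected_contractEdge h2c.2.1 hxy.ne
  refine ⟨y, hxy, ?_⟩
  rcases h2c.1.eq_or_lt with h3 | h4
  · exact .inr ⟨by omega, fun a b hab => hconn.adj_of_card_eq_two (by omega) hab⟩
  refine .inl ⟨by omega, hconn, fun w => connected_deleteVerts_iff.2 ?_⟩
  refine connected_induce_compl_contractEdge hxy.ne w ?_
  by_cases hw : w.1 = x
  · rwa [show w = ⟨x, hxy.ne⟩ from Subtype.ext hw, preimage_contractEdgeProj_merged]
  · rw [preimage_contractEdgeProj_of_ne hxy.ne hw]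
    exact h2c.connected_induce_compl_singleton w.1
end

section
/- Let $\mathcal{A}$ be a minor-closed class of graphs, let $j \ge 1$. Then the apex width of order $j$ of $\mathcal{A}$ is finite if and only if some $j$-fan and some complete bipartite graph $K_{j+1,t}$ do not belong to $\mathcal{A}$. -/
/-- `H` is a minor of `G` (branch set definition). -/
def IsMinor {U V : Type*} (H : SimpleGraph U) (G : SimpleGraph V) : Prop :=
  ∃ B : U → Set V, (∀ u, (B u).Nonempty) ∧ (∀ u, (G.induce (B u)).Connected) ∧
    (Pairwise fun u u' => Disjoint (B u) (B u')) ∧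
    ∀ ⦃u u'⦄, H.Adj u u' → ∃ x ∈ B u, ∃ y ∈ B u', G.Adj x y

/-- The `j`-fan with `s` path vertices: a complete bipartite graph between
`Fin j` and `Fin s`, together with a path on `Fin s`. -/
def fanGraph (j s : ℕ) : SimpleGraph (Fin j ⊕ Fin s) where
  Adj x y :=
    (∃ a b, x = Sum.inl a ∧ y = Sum.inr b) ∨
    (∃ a b, x = Sum.inr a ∧ y = Sum.inl b) ∨
    (∃ a b : Fin s, x = Sum.inr a ∧ y = Sum.inr b ∧ (a.1 + 1 = b.1 ∨ b.1 + 1 = a.1))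
  symm := by
    constructor
    rintro x y (⟨a, b, rfl, rfl⟩ | ⟨a, b, rfl, rfl⟩ | ⟨a, b, rfl, rfl, h⟩)
    · exact Or.inr (Or.inl ⟨b, a, rfl, rfl⟩)
    · exact Or.inl ⟨b, a, rfl, rfl⟩
    · exact Or.inr (Or.inr ⟨b, a, rfl, rfl, h.symm⟩)
  loopless := by
    constructor
    rintro x (⟨a, b, rfl, h2⟩ | ⟨a, b, rfl, h2⟩ | ⟨a, b, rfl, h2, h3⟩) <;> simp_all

/-- The graph consisting of a tree `T` on `Fin m` together with the complete
bipartite graph between `V(T)` and `j` extra vertices. -/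
def treeApex {m : ℕ} (T : SimpleGraph (Fin m)) (j : ℕ) : SimpleGraph (Fin m ⊕ Fin j) where
  Adj x y :=
    (∃ a b, x = Sum.inl a ∧ y = Sum.inl b ∧ T.Adj a b) ∨
    (∃ a b, x = Sum.inl a ∧ y = Sum.inr b) ∨
    (∃ a b, x = Sum.inr a ∧ y = Sum.inl b)
  symm := by
    constructor
    rintro x y (⟨a, b, rfl, rfl, h⟩ | ⟨a, b, rfl, rfl⟩ | ⟨a, b, rfl, rfl⟩)
    · exact Or.inl ⟨b, a, rfl, rfl, h.symm⟩
    · exact Or.inr (Or.inr ⟨b, a, rfl, rfl⟩)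
    · exact Or.inr (Or.inl ⟨b, a, rfl, rfl⟩)
  loopless := by
    constructor
    rintro x (⟨a, b, rfl, h2, h3⟩ | ⟨a, b, rfl, h2⟩ | ⟨a, b, rfl, h2⟩) <;> simp_all

/-- A graph `G` belongs (up to isomorphism) to the class `A` of labelled graphs. -/
def MemClass (A : ∀ n : ℕ, Set (SimpleGraph (Fin n))) {W : Type*} (G : SimpleGraph W) : Prop :=
  ∃ (n : ℕ) (H : SimpleGraph (Fin n)), H ∈ A n ∧ Nonempty (G ≃g H)

/-!
If every tree `T` with `treeApex T j` a minor of a graph in the class has at most `N` vertices,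
then the `j`-fan on `N + 1` path vertices, which is `treeApex` of a path, is not in the class,
and neither is `K_{j+1, j+N}`, which has `treeApex` of a star with `N + 1` vertices as a minor.

Conversely, if the fan `F_{j,s}` and `K_{j+1,t}` are excluded, a tree `T` with `treeApex T j` in
the class contains no vertex of degree `t` (a star with `t` leaves plus the `j` apices contains
`K_{j+1,t}`) and no path on `s` vertices (the path plus the apices is the fan). Breadth-first
layers around any vertex then grow by a factor of at most `t` and there are fewer than `s` of
them, so `T` has at most `∑ d < s, t ^ d` vertices.
-/

open SimpleGraph Finset

def IsMinorClosed (A : ∀ n : ℕ, Set (SimpleGraph (Fin n))) : Prop :=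
  ∀ (n m : ℕ) (G : SimpleGraph (Fin n)) (H : SimpleGraph (Fin m)), G ∈ A n → IsMinor H G → H ∈ A m

/-- `aw_j(A) ≤ N`. -/
def ApexWidthLE (A : ∀ n : ℕ, Set (SimpleGraph (Fin n))) (j N : ℕ) : Prop :=
  ∀ (n : ℕ), ∀ G ∈ A n, ∀ (m : ℕ) (T : SimpleGraph (Fin m)),
    T.IsTree → IsMinor (treeApex T j) G → m ≤ N

section Minor

variable {U U' V V' : Type*} {H : SimpleGraph U} {H' : SimpleGraph U'} {G : SimpleGraph V}
  {G' : SimpleGraph V'}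

lemma induce_connected_of_forall_eq_or_adj {S : Set V} {c : V} (hc : c ∈ S)
    (hS : ∀ x ∈ S, x = c ∨ G.Adj c x) : (G.induce S).Connected := by
  have : Nonempty S := ⟨⟨c, hc⟩⟩
  refine (connected_iff_exists_forall_reachable _).2 ⟨⟨c, hc⟩, fun ⟨x, hx⟩ => ?_⟩
  rcases hS x hx with rfl | hcx
  · rfl
  · exact Adj.reachable (G := G.induce S) hcx

lemma IsMinor.of_branchSets (B : U → Set V) (ψ : V → U) (hψ : ∀ u, ∀ x ∈ B u, ψ x = u)
    (hconn : ∀ u, (G.induce (B u)).Connected)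
    (hadj : ∀ ⦃u u'⦄, H.Adj u u' → ∃ x ∈ B u, ∃ y ∈ B u', G.Adj x y) : IsMinor H G := by
  refine ⟨B, fun u => ?_, hconn, fun u u' huu' => ?_, hadj⟩
  · obtain ⟨⟨x, hx⟩⟩ := (hconn u).nonempty
    exact ⟨x, hx⟩
  · exact Set.disjoint_left.2 fun x hx hx' => huu' ((hψ u x hx).symm.trans (hψ u' x hx'))

lemma IsMinor.refl (G : SimpleGraph V) : IsMinor G G :=
  .of_branchSets (fun v => {v}) id (fun _ _ hx => hx)
    (fun _ => induce_connected_of_forall_eq_or_adj rfl fun _ hx => .inl hx)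
    (fun v w h => ⟨v, rfl, w, rfl, h⟩)

lemma SimpleGraph.IsContained.trans_isMinor (h : H' ⊑ H) (hHG : IsMinor H G) : IsMinor H' G := by
  obtain ⟨f⟩ := h
  obtain ⟨B, hne, hconn, hdisj, hadj⟩ := hHG
  exact ⟨B ∘ f, fun u => hne _, fun u => hconn _, fun u u' huu' => hdisj (f.injective.ne huu'),
    fun u u' h => hadj (f.toHom.map_adj h)⟩

lemma SimpleGraph.IsContained.isMinor (h : H ⊑ G) : IsMinor H G :=
  h.trans_isMinor (.refl G)

lemma IsMinor.of_iso_right (e : G ≃g G') (h : IsMinor H G) : IsMinor H G' := by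
  obtain ⟨B, hne, hconn, hdisj, hadj⟩ := h
  refine ⟨fun u => e '' B u, fun u => (hne u).image _, fun u => ?_, fun u u' huu' => ?_,
    fun u u' h => ?_⟩
  · have iso : G.induce (B u) ≃g G'.induce (e '' B u) :=
      ⟨e.toEquiv.image (B u), e.map_rel_iff⟩
    exact iso.connected_iff.1 (hconn u)
  · exact Set.disjoint_image_of_injective e.injective (hdisj huu')
  · obtain ⟨x, hx, y, hy, hxy⟩ := hadj h
    exact ⟨e x, Set.mem_image_of_mem _ hx, e y, Set.mem_image_of_mem _ hy, e.map_rel_iff.2 hxy⟩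

end Minor

section Constructions

variable {m j : ℕ} {T : SimpleGraph (Fin m)}

@[simp] lemma treeApex_adj_inl_inl {a b : Fin m} :
    (treeApex T j).Adj (.inl a) (.inl b) ↔ T.Adj a b := by
  simp [treeApex]

@[simp] lemma treeApex_adj_inl_inr {a : Fin m} {i : Fin j} :
    (treeApex T j).Adj (.inl a) (.inr i) := by
  simp [treeApex]

@[simp] lemma treeApex_adj_inr_inl {i : Fin j} {a : Fin m} :
    (treeApex T j).Adj (.inr i) (.inl a) := by
  simp [treeApex]

@[simp] lemma treeApex_adj_inr_inr {i i' : Fin j} : ¬ (treeApex T j).Adj (.inr i) (.inr i') := by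
  simp [treeApex]

lemma SimpleGraph.IsContained.treeApex {m' : ℕ} {T' : SimpleGraph (Fin m')} (h : T ⊑ T') :
    treeApex T j ⊑ treeApex T' j := by
  obtain ⟨f⟩ := h
  refine ⟨⟨⟨Sum.map f id, ?_⟩, Sum.map_injective.2 ⟨f.injective, Function.injective_id⟩⟩⟩
  rintro (a | i) (b | i') h
  · exact treeApex_adj_inl_inl.2 (f.toHom.map_adj (treeApex_adj_inl_inl.1 h))
  all_goals simp_all

def fanGraphIsoTreeApexPathGraph (j s : ℕ) : fanGraph j s ≃g treeApex (pathGraph s) j where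
  toEquiv := Equiv.sumComm _ _
  map_rel_iff' := by
    rintro (i | a) (i' | b) <;> simp [fanGraph, pathGraph_adj]

lemma starGraph_isContained_of_le_degree {V : Type*} {G : SimpleGraph V} [Fintype V]
    [DecidableRel G.Adj] {t : ℕ} {v : V} (h : t ≤ G.degree v) :
    starGraph (0 : Fin (t + 1)) ⊑ G := by
  obtain ⟨f⟩ : Nonempty (Fin t ↪ G.neighborSet v) :=
    Function.Embedding.nonempty_of_card_le (by rwa [Fintype.card_fin, card_neighborSet_eq_degree])
  have hv : ∀ i, G.Adj v (f i) := fun i => (f i).2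
  refine ⟨⟨⟨Fin.cases v fun i => f i, ?_⟩, ?_⟩⟩
  · intro x y hxy
    induction x using Fin.cases <;> induction y using Fin.cases <;> simp_all [(hv _).symm]
  · intro x y hxy
    induction x using Fin.cases <;> induction y using Fin.cases <;>
      simp_all [(hv _).ne, (hv _).ne', Subtype.val_injective.eq_iff]

lemma completeBipartiteGraph_isContained_treeApex_starGraph (j t : ℕ) :
    completeBipartiteGraph (Fin (j + 1)) (Fin t) ⊑ treeApex (starGraph (0 : Fin (t + 1))) j := by
  refine ⟨⟨⟨Sum.elim (Fin.lastCases (.inl 0) .inr) (fun b => .inl b.succ), ?_⟩, ?_⟩⟩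
  · rintro (a | b) (a' | b') h <;> simp at h
    · induction a using Fin.lastCases <;> simp [(Fin.succ_ne_zero _).symm]
    · induction a' using Fin.lastCases <;> simp [Fin.succ_ne_zero]
  · rintro (a | b) (a' | b') h
    · induction a using Fin.lastCases <;> induction a' using Fin.lastCases <;> simp_all
    · induction a using Fin.lastCases <;> simp_all [(Fin.succ_ne_zero _).symm]
    · induction a' using Fin.lastCases <;> simp_all [Fin.succ_ne_zero]
    · simpa using h

/-- Apex `i` is contracted with a private vertex `Fin.castAdd N i` of the large side, which makes
it adjacent to the centre `Fin.last j`. -/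
lemma treeApex_starGraph_isMinor_completeBipartiteGraph (j N : ℕ) :
    IsMinor (treeApex (starGraph (0 : Fin (N + 1))) j)
      (completeBipartiteGraph (Fin (j + 1)) (Fin (j + N))) := by
  refine .of_branchSets
    (Sum.elim (Fin.cases {.inl (Fin.last j)} fun k => {.inr (Fin.natAdd j k)})
      fun i => {.inl i.castSucc, .inr (Fin.castAdd N i)})
    (Sum.elim (Fin.lastCases (.inl 0) .inr) (Fin.addCases .inr fun k => .inl k.succ))
    ?_ ?_ ?_
  · rintro (a | i)
    · induction a using Fin.cases <;> simp
    · simp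
  · rintro (a | i)
    · induction a using Fin.cases <;>
        exact induce_connected_of_forall_eq_or_adj rfl fun _ hx => .inl hx
    · exact induce_connected_of_forall_eq_or_adj (.inl rfl) (by simp)
  · rintro (a | i) (b | i') h
    · induction a using Fin.cases <;> induction b using Fin.cases <;> simp_all
    · induction a using Fin.cases <;> simp
    · induction b using Fin.cases <;> simp
    · simp at h

end Constructions

section Growth

variable {V : Type*} {G : SimpleGraph V}

lemma SimpleGraph.Connected.exists_adj_dist_lt (hG : G.Connected) {r v : V} (hv : v ≠ r) :
    ∃ u, G.Adj v u ∧ G.dist r u < G.dist r v := by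
  obtain ⟨p, -, hp⟩ := hG.exists_path_of_dist v r
  cases p with
  | nil => exact absurd rfl hv
  | cons hvu q =>
    refine ⟨_, hvu, ?_⟩
    rw [dist_comm, dist_comm (u := r), ← hp, Walk.length_cons]
    exact Nat.lt_succ_of_le (dist_le q)

lemma SimpleGraph.Connected.card_filter_dist_lt_le [Fintype V] [DecidableEq V] [DecidableRel G.Adj]
    (hG : G.Connected) (r : V) {t : ℕ} (hdeg : ∀ v, G.degree v ≤ t) (s : ℕ) :
    #{v | G.dist r v < s} ≤ ∑ d ∈ range s, t ^ d := by
  induction s with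
  | zero => simp
  | succ s ih =>
    have hsub : ({v | G.dist r v < s + 1} : Finset V) ⊆
        insert r (({v | G.dist r v < s} : Finset V).biUnion fun u => G.neighborFinset u) := by
      intro v hv
      rcases eq_or_ne v r with rfl | hvr
      · exact mem_insert_self _ _
      obtain ⟨u, hvu, hu⟩ := hG.exists_adj_dist_lt hvr
      simp only [mem_filter, mem_univ, true_and] at hv
      exact mem_insert_of_mem (mem_biUnion.2 ⟨u, by simp; omega, by simpa using hvu.symm⟩)
    calc #{v | G.dist r v < s + 1}
        ≤ #(({v | G.dist r v < s} : Finset V).biUnion fun u => G.neighborFinset u) + 1 :=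
          (card_le_card hsub).trans (card_insert_le _ _)
      _ ≤ ∑ u ∈ ({v | G.dist r v < s} : Finset V), G.degree u + 1 := by
          gcongr; exact card_biUnion_le
      _ ≤ #{v | G.dist r v < s} * t + 1 := by
          gcongr; exact sum_le_card_nsmul _ _ _ fun u _ => hdeg u
      _ ≤ (∑ d ∈ range s, t ^ d) * t + 1 := by gcongr
      _ = ∑ d ∈ range (s + 1), t ^ d := by
          rw [sum_range_succ', sum_mul]; simp [pow_succ]

lemma pathGraph_isContained_pathGraph {s n : ℕ} (h : s ≤ n) : pathGraph s ⊑ pathGraph n :=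
  ⟨⟨⟨Fin.castLE h, fun hab => by simpa [pathGraph_adj] using hab⟩, Fin.castLE_injective h⟩⟩

lemma SimpleGraph.Reachable.pathGraph_isContained {u v : V} (h : G.Reachable u v) {s : ℕ}
    (hs : s ≤ G.dist u v + 1) : pathGraph s ⊑ G := by
  obtain ⟨p, hp, hlen⟩ := h.exists_path_of_dist
  exact (pathGraph_isContained_pathGraph (hlen ▸ hs)).trans hp.isContained_pathGraph

lemma SimpleGraph.Connected.starGraph_isContained_or_pathGraph_isContained_or_card_le
    [Fintype V] [DecidableRel G.Adj] (hG : G.Connected) (s t : ℕ) :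
    starGraph (0 : Fin (t + 1)) ⊑ G ∨ pathGraph s ⊑ G ∨
      Fintype.card V ≤ ∑ d ∈ range s, t ^ d := by
  classical
  by_cases hdeg : ∃ v, t ≤ G.degree v
  · obtain ⟨v, hv⟩ := hdeg
    exact .inl (starGraph_isContained_of_le_degree hv)
  obtain ⟨r⟩ := hG.nonempty
  by_cases hdist : ∃ v, s ≤ G.dist r v + 1
  · obtain ⟨v, hv⟩ := hdist
    exact .inr (.inl ((hG r v).pathGraph_isContained hv))
  push Not at hdeg hdist
  refine .inr (.inr ?_)
  calc Fintype.card V = #{v | G.dist r v < s} := by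
        rw [filter_true_of_mem fun v _ => by have := hdist v; omega, card_univ]
    _ ≤ ∑ d ∈ range s, t ^ d := hG.card_filter_dist_lt_le r (fun v => (hdeg v).le) s

end Growth

section GraphClass

variable {A : ∀ n : ℕ, Set (SimpleGraph (Fin n))} {W W' : Type*}

lemma memClass_of_mem {n : ℕ} {G : SimpleGraph (Fin n)} (hG : G ∈ A n) : MemClass A G :=
  ⟨n, G, hG, ⟨.refl⟩⟩

lemma MemClass.of_isMinor (hA : IsMinorClosed A) [Fintype W'] {G : SimpleGraph W}
    {H : SimpleGraph W'} (hG : MemClass A G) (h : IsMinor H G) : MemClass A H := by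
  obtain ⟨n, G₀, hG₀, ⟨e⟩⟩ := hG
  let e' := Iso.map (Fintype.equivFin W') H
  exact ⟨_, _, hA n _ G₀ _ hG₀ (e'.symm.isContained.trans_isMinor (h.of_iso_right e)), ⟨e'⟩⟩

lemma not_memClass_of_apexWidthLE {j N : ℕ} (hN : ApexWidthLE A j N)
    {C : SimpleGraph (Fin (N + 1))} (hC : C.Connected) {X : SimpleGraph W}
    (h : IsMinor (treeApex C j) X) : ¬ MemClass A X := by
  rintro ⟨n, G, hG, ⟨e⟩⟩
  obtain ⟨T, hTC, hT⟩ := hC.exists_isTree_le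
  have := hN n G hG (N + 1) T hT
    ((IsContained.of_le hTC).treeApex.trans_isMinor (h.of_iso_right e))
  omega

lemma apexWidthLE_of_not_memClass (hA : IsMinorClosed A) {j s t : ℕ}
    (hs : ¬ MemClass A (fanGraph j s))
    (ht : ¬ MemClass A (completeBipartiteGraph (Fin (j + 1)) (Fin t))) :
    ApexWidthLE A j (∑ d ∈ range s, t ^ d) := by
  classical
  intro n G hG m T hT hTG
  have hTA : MemClass A (treeApex T j) := (memClass_of_mem hG).of_isMinor hA hTG
  rcases hT.connected.starGraph_isContained_or_pathGraph_isContained_or_card_le s t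
    with hstar | hpath | hcard
  · exact absurd (hTA.of_isMinor hA
      ((completeBipartiteGraph_isContained_treeApex_starGraph j t).trans hstar.treeApex).isMinor) ht
  · exact absurd (hTA.of_isMinor hA
      ((fanGraphIsoTreeApexPathGraph j s).isContained.trans hpath.treeApex).isMinor) hs
  · simpa using hcard

end GraphClass

theorem apex_width_finite_iff_general (A : ∀ n : ℕ, Set (SimpleGraph (Fin n))) (j : ℕ)
    (hminor : ∀ (n m : ℕ) (G : SimpleGraph (Fin n)) (H : SimpleGraph (Fin m)),
      G ∈ A n → IsMinor H G → H ∈ A m) :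
    (∃ N : ℕ, ∀ (n : ℕ), ∀ G ∈ A n, ∀ (m' : ℕ) (T : SimpleGraph (Fin m')),
        T.IsTree → IsMinor (treeApex T j) G → m' ≤ N) ↔
      ((∃ s, ¬ MemClass A (fanGraph j s)) ∧
        (∃ t, ¬ MemClass A (completeBipartiteGraph (Fin (j + 1)) (Fin t)))) := by
  refine ⟨fun ⟨N, hN⟩ => ⟨⟨N + 1, ?_⟩, ⟨j + N, ?_⟩⟩,
    fun ⟨⟨s, hs⟩, t, ht⟩ => ⟨_, apexWidthLE_of_not_memClass hminor hs ht⟩⟩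
  · exact not_memClass_of_apexWidthLE hN (pathGraph_connected N)
      (fanGraphIsoTreeApexPathGraph j (N + 1)).symm.isContained.isMinor
  · exact not_memClass_of_apexWidthLE hN (connected_starGraph 0)
      (treeApex_starGraph_isMinor_completeBipartiteGraph j N)

/-- For a minor-closed class `A`, the apex width of order `j` of `A` is finite
iff some `j`-fan and some `K_{j+1,t}` are not in `A`. -/
theorem apex_width_finite_iff (A : ∀ n : ℕ, Set (SimpleGraph (Fin n))) (j : ℕ)
    (hj : 1 ≤ j)
    (hminor : ∀ (n m : ℕ) (G : SimpleGraph (Fin n)) (H : SimpleGraph (Fin m)),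
      G ∈ A n → IsMinor H G → H ∈ A m) :
    (∃ N : ℕ, ∀ (n : ℕ), ∀ G ∈ A n, ∀ (m' : ℕ) (T : SimpleGraph (Fin m')),
        T.IsTree → IsMinor (treeApex T j) G → m' ≤ N) ↔
      ((∃ s, ¬ MemClass A (fanGraph j s)) ∧
        (∃ t, ¬ MemClass A (completeBipartiteGraph (Fin (j + 1)) (Fin t)))) :=
  apex_width_finite_iff_general A j hminor
end

section
/- Let $G$ be a parallel SP-network with source $s$ and sink $t$. Then for every internal vertex $v$ of $G$ there exist two internally disjoint paths from $s$ to $t$ such that one of the paths contains $v$. -/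
/-!
By Whitney's theorem, `s` and `t` lie on a cycle of the 2-connected graph `G`: there are
internally disjoint `s`–`t` paths `P` and `Q`. If `v` is off this cycle, 2-connectivity gives a
fan from `v`, i.e. two paths from `v` to distinct vertices `x`, `y` of the cycle which meet each
other only at `v` and the cycle only at their ends. If `x` and `y` lie on the same one of `P`, `Q`,
replacing the segment of that path between them by the fan reroutes it through `v`. Otherwise
`x` and `y` are interior vertices of different paths, and the branch sets `{s}`, `{t}`,
(interior of `P`) ∪ (fan minus `y`) and (interior of `Q`) exhibit a `K₄` minor of `G + st`.
-/

namespace SimpleGraph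

variable {V : Type*} {G : SimpleGraph V} {s t u v w x y z : V}

namespace Walk

def IsInternallyDisjoint (p q : G.Walk u v) : Prop :=
  ∀ w ∈ p.support, w ∈ q.support → w = u ∨ w = v

theorem IsInternallyDisjoint.symm {p q : G.Walk u v} (h : p.IsInternallyDisjoint q) :
    q.IsInternallyDisjoint p :=
  fun w hq hp => h w hp hq

theorem IsInternallyDisjoint.inter_eq {p q : G.Walk u v} (h : p.IsInternallyDisjoint q) :
    {w | w ∈ p.support} ∩ {w | w ∈ q.support} = {u, v} := by
  ext w
  constructor
  · rintro ⟨hp, hq⟩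
    exact h w hp hq
  · rintro (rfl | rfl)
    · exact ⟨p.start_mem_support, q.start_mem_support⟩
    · exact ⟨p.end_mem_support, q.end_mem_support⟩

theorem IsPath.append {p : G.Walk u v} {q : G.Walk v w} (hp : p.IsPath) (hq : q.IsPath)
    (h : ∀ x ∈ p.support, x ∈ q.support → x = v) : (p.append q).IsPath := by
  rw [isPath_def, support_append]
  refine hp.support_nodup.append (hq.support_nodup.sublist (List.tail_sublist _)) ?_
  intro x hxp hxq
  obtain rfl := h x hxp (List.mem_of_mem_tail hxq)
  have hq' := hq.support_nodup
  rw [← q.cons_tail_support] at hq'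
  exact (List.nodup_cons.1 hq').1 hxq

theorem IsPath.exists_interior {p : G.Walk u v} (hp : p.IsPath) (hx : x ∈ p.support)
    (hxu : x ≠ u) (hxv : x ≠ v) :
    ∃ a b, ∃ q : G.Walk a b, G.Adj u a ∧ G.Adj b v ∧
      ∀ w, w ∈ q.support ↔ w ∈ p.support ∧ w ≠ u ∧ w ≠ v := by
  cases p with
  | nil => exact absurd (mem_support_nil_iff.1 hx) hxu
  | @cons _ a _ hua p =>
    have hxp : x ∈ p.support := by simpa [hxu] using hx
    have hav : a ≠ v := by
      rintro rfl
      obtain rfl := eq_nil_iff_nil.2 (isPath_iff_nil.1 hp.of_cons)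
      exact hxv (mem_support_nil_iff.1 hxp)
    obtain ⟨b, q, hbv, rfl⟩ : ∃ b, ∃ q : G.Walk a b, ∃ hbv : G.Adj b v, p = q.concat hbv :=
      ⟨_, _, _, (p.concat_dropLast (p.adj_penultimate (not_nil_of_ne hav))).symm⟩
    have hu : u ∉ (q.concat hbv).support := ((cons_isPath_iff _ _).1 hp).2
    have hv : v ∉ q.support := ((concat_isPath_iff hbv).1 hp.of_cons).2
    refine ⟨a, b, q, hua, hbv, fun w => ?_⟩
    simp only [support_concat, List.mem_append, not_or, support_cons, List.mem_cons] at hu ⊢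
    grind

variable [DecidableEq V]

theorem exists_isPath_to_set (p : G.Walk u v) {S : Set V} (hv : v ∈ S) :
    ∃ z ∈ S, ∃ q : G.Walk u z, q.IsPath ∧ q.support ⊆ p.support ∧
      ∀ w ∈ q.support, w ∈ S → w = z := by
  suffices ∃ z ∈ S, ∃ q : G.Walk u z, q.support ⊆ p.support ∧
      ∀ w ∈ q.support, w ∈ S → w = z by
    obtain ⟨z, hz, q, hqp, hqS⟩ := this
    exact ⟨z, hz, q.bypass, q.bypass_isPath, List.Subset.trans q.support_bypass_subset_support hqp,
      fun w hw => hqS w (q.support_bypass_subset_support hw)⟩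
  induction p with
  | nil => exact ⟨_, hv, nil, by simp, by simp⟩
  | @cons u a v hua p ih =>
    by_cases hu : u ∈ S
    · exact ⟨u, hu, nil, by simp, by simp⟩
    obtain ⟨z, hz, q, hqp, hqS⟩ := ih hv
    refine ⟨z, hz, cons hua q, ?_, ?_⟩
    · simpa using List.subset_cons_of_subset u hqp
    · rintro w (_ | ⟨_, hw⟩) hwS
      · exact absurd hwS hu
      · exact hqS w hw hwS

theorem exists_isPath_between_sets (p : G.Walk u v) {S T : Set V} (hu : u ∈ S) (hv : v ∈ T) :
    ∃ a ∈ S, ∃ b ∈ T, ∃ q : G.Walk a b, q.IsPath ∧ q.support ⊆ p.support ∧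
      (∀ w ∈ q.support, w ∈ S → w = a) ∧ ∀ w ∈ q.support, w ∈ T → w = b := by
  obtain ⟨b, hb, q, -, hqp, hqT⟩ := p.exists_isPath_to_set hv
  obtain ⟨a, ha, r, hr, hrq, hrS⟩ := q.reverse.exists_isPath_to_set hu
  refine ⟨a, ha, b, hb, r.reverse, hr.reverse, ?_, by simpa using hrS, ?_⟩
  · simpa using List.Subset.trans hrq (by simpa using hqp)
  · intro w hw hwT
    exact hqT w (by simpa using hrq (by simpa using hw)) hwT

theorem IsPath.eq_of_mem_takeUntil_of_mem_dropUntil {p : G.Walk u v} (hp : p.IsPath)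
    (hx : x ∈ p.support) (h₁ : y ∈ (p.takeUntil x hx).support)
    (h₂ : y ∈ (p.dropUntil x hx).support) : y = x := by
  by_contra hyx
  have hp' : ((p.takeUntil x hx).append (p.dropUntil x hx)).IsPath := by rwa [p.take_spec hx]
  exact hp'.ne_of_mem_support_of_append hyx h₁ h₂ rfl

theorem IsPath.eq_of_end_mem_takeUntil {p : G.Walk u v} (hp : p.IsPath) (hx : x ∈ p.support)
    (h : v ∈ (p.takeUntil x hx).support) : v = x :=
  hp.eq_of_mem_takeUntil_of_mem_dropUntil hx h (p.dropUntil x hx).end_mem_support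

theorem IsPath.eq_of_start_mem_dropUntil {p : G.Walk u v} (hp : p.IsPath) (hx : x ∈ p.support)
    (h : u ∈ (p.dropUntil x hx).support) : u = x :=
  hp.eq_of_mem_takeUntil_of_mem_dropUntil hx (p.takeUntil x hx).start_mem_support h

theorem mem_support_dropUntil_of_notMem_takeUntil {p : G.Walk u v} (hx : x ∈ p.support)
    (hy : y ∈ p.support) (h : y ∉ (p.takeUntil x hx).support) :
    y ∈ (p.dropUntil x hx).support := by
  rw [← p.take_spec hx, mem_support_append_iff] at hy
  exact hy.resolve_left h

theorem mem_support_dropUntil_or (p : G.Walk u v) (hx : x ∈ p.support) (hy : y ∈ p.support)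
    (hxy : x ≠ y) : y ∈ (p.dropUntil x hx).support ∨ x ∈ (p.dropUntil y hy).support := by
  by_cases h : y ∈ (p.takeUntil x hx).support
  · exact .inr <| mem_support_dropUntil_of_notMem_takeUntil hy hx <|
      notMem_support_takeUntil_support_takeUntil_subset hxy.symm hx h
  · exact .inl <| mem_support_dropUntil_of_notMem_takeUntil hx hy h

-- The new paths are `P` up to `z` followed by `T` backwards, and `Q` followed by the edge `wt`.
theorem IsInternallyDisjoint.extend {P Q : G.Walk s w} (hP : P.IsPath) (hQ : Q.IsPath)
    (hPQ : P.IsInternallyDisjoint Q) (hwt : G.Adj w t) (hts : t ≠ s) {T : G.Walk t z}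
    (hT : T.IsPath) (hz : z ∈ P.support) (hzw : z ≠ w)
    (hTPQ : ∀ u ∈ T.support, u ∈ P.support ∨ u ∈ Q.support → u = z) (hwT : w ∉ T.support) :
    ∃ p q : G.Walk s t, p.IsPath ∧ q.IsPath ∧ p.IsInternallyDisjoint q := by
  have hwz : w ∉ (P.takeUntil z hz).support := fun h => hzw (hP.eq_of_end_mem_takeUntil hz h).symm
  have htQ : t ∉ Q.support := by
    intro htQ
    obtain rfl := hTPQ t T.start_mem_support (.inr htQ)
    exact (hPQ t hz htQ).elim hts hwt.ne.symm
  refine ⟨(P.takeUntil z hz).append T.reverse, Q.concat hwt,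
    (hP.takeUntil hz).append hT.reverse fun u hu hu' => ?_, hQ.concat htQ hwt, fun u hp hq => ?_⟩
  · exact hTPQ u (by simpa using hu') (.inl (P.support_takeUntil_subset_support hz hu))
  · simp only [mem_support_append_iff, support_reverse, List.mem_reverse, support_concat,
      List.mem_append, List.mem_singleton] at hp hq
    rcases hq with hq | rfl
    · rcases hp with hp | hp
      · rcases hPQ u (P.support_takeUntil_subset_support hz hp) hq with h | rfl
        · exact .inl h
        · exact absurd hp hwz
      · obtain rfl := hTPQ u hp (.inr hq)
        exact (hPQ u hz hq).imp_right fun h => absurd h hzw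
    · exact .inr rfl

end Walk

open Walk

theorem isMinor_K4_sup_edge_of_connected {X Y : Set V} (hst : s ≠ t)
    (hX : (G.induce X).Connected) (hY : (G.induce Y).Connected) (hXY : Disjoint X Y)
    (hsX : s ∉ X) (htX : t ∉ X) (hsY : s ∉ Y) (htY : t ∉ Y)
    (hsX' : ∃ a ∈ X, G.Adj s a) (htX' : ∃ a ∈ X, G.Adj t a) (hsY' : ∃ a ∈ Y, G.Adj s a)
    (htY' : ∃ a ∈ Y, G.Adj t a) (hXY' : ∃ a ∈ X, ∃ b ∈ Y, G.Adj a b) :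
    IsMinor (⊤ : SimpleGraph (Fin 4)) (G ⊔ fromEdgeSet {s(s, t)}) := by
  set G' := G ⊔ fromEdgeSet {s(s, t)}
  have hGG' : G ≤ G' := le_sup_left
  let B : Fin 4 → Set V := ![{s}, {t}, X, Y]
  have hsingle (a : V) : (G'.induce {a}).Connected :=
    (connected_iff _).2 ⟨.of_subsingleton, ⟨⟨a, rfl⟩⟩⟩
  have hconn : ∀ i, (G'.induce (B i)).Connected := by
    intro i
    fin_cases i
    · exact hsingle s
    · exact hsingle t
    · exact hX.mono fun _ _ h => hGG' h
    · exact hY.mono fun _ _ h => hGG' h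
  have hdisj : ∀ i j, i < j → Disjoint (B i) (B j) := by
    intro i j hij
    fin_cases i <;> fin_cases j <;> simp at hij
    exacts [Set.disjoint_singleton.2 hst, Set.disjoint_singleton_left.2 hsX,
      Set.disjoint_singleton_left.2 hsY, Set.disjoint_singleton_left.2 htX,
      Set.disjoint_singleton_left.2 htY, hXY]
  have hadj : ∀ i j, i < j → ∃ a ∈ B i, ∃ b ∈ B j, G'.Adj a b := by
    intro i j hij
    fin_cases i <;> fin_cases j <;> simp at hij
    · exact ⟨s, rfl, t, rfl, .inr ⟨rfl, hst⟩⟩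
    · obtain ⟨a, ha, h⟩ := hsX'
      exact ⟨s, rfl, a, ha, hGG' h⟩
    · obtain ⟨a, ha, h⟩ := hsY'
      exact ⟨s, rfl, a, ha, hGG' h⟩
    · obtain ⟨a, ha, h⟩ := htX'
      exact ⟨t, rfl, a, ha, hGG' h⟩
    · obtain ⟨a, ha, h⟩ := htY'
      exact ⟨t, rfl, a, ha, hGG' h⟩
    · obtain ⟨a, ha, b, hb, h⟩ := hXY'
      exact ⟨a, ha, b, hb, hGG' h⟩
  refine ⟨B, fun i => ?_, hconn, (pairwise_disjoint_on B).2 hdisj, fun i j hij => ?_⟩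
  · obtain ⟨⟨a, ha⟩⟩ := (hconn i).nonempty
    exact ⟨a, ha⟩
  · rcases ((top_adj _ _).1 hij).lt_or_gt with h | h
    · exact hadj i j h
    · obtain ⟨a, ha, b, hb, hab⟩ := hadj j i h
      exact ⟨b, hb, a, ha, hab.symm⟩

structure IsFan (C : Set V) (A : G.Walk v x) (B : G.Walk v y) : Prop where
  isPath_left : A.IsPath
  isPath_right : B.IsPath
  ne : x ≠ y
  mem_left : x ∈ C
  mem_right : y ∈ C
  eq_of_mem_left : ∀ u ∈ A.support, u ∈ C → u = x
  eq_of_mem_right : ∀ u ∈ B.support, u ∈ C → u = y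
  eq_of_mem_left_right : ∀ u ∈ A.support, u ∈ B.support → u = v

theorem IsFan.symm {C : Set V} {A : G.Walk v x} {B : G.Walk v y} (h : IsFan C A B) :
    IsFan C B A :=
  ⟨h.isPath_right, h.isPath_left, h.ne.symm, h.mem_right, h.mem_left, h.eq_of_mem_right,
    h.eq_of_mem_left, fun u hB hA => h.eq_of_mem_left_right u hA hB⟩

theorem Walk.IsInternallyDisjoint.isMinor_K4_of_isFan {P Q : G.Walk s t}
    (hP : P.IsPath) (hQ : Q.IsPath) (hPQ : P.IsInternallyDisjoint Q) (hst : s ≠ t) {C : Set V}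
    (hQC : ∀ u ∈ Q.support, u ∈ C) {A : G.Walk v x} {B : G.Walk v y} (hF : IsFan C A B)
    (hx : x ∈ P.support) (hxQ : x ∉ Q.support) (hy : y ∈ Q.support) (hyP : y ∉ P.support) :
    IsMinor (⊤ : SimpleGraph (Fin 4)) (G ⊔ fromEdgeSet {s(s, t)}) := by
  have hxs : x ≠ s := fun h => hxQ (h ▸ Q.start_mem_support)
  have hxt : x ≠ t := fun h => hxQ (h ▸ Q.end_mem_support)
  have hys : y ≠ s := fun h => hyP (h ▸ P.start_mem_support)
  have hyt : y ≠ t := fun h => hyP (h ▸ P.end_mem_support)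
  obtain ⟨a, b, I, hsa, hbt, hI⟩ := hP.exists_interior hx hxs hxt
  obtain ⟨c, d, J, hsc, hdt, hJ⟩ := hQ.exists_interior hy hys hyt
  have hvy : v ≠ y := fun h => hF.ne (hF.eq_of_mem_left y (h ▸ A.start_mem_support) (hQC y hy)).symm
  obtain ⟨e, B', hey, rfl⟩ : ∃ e, ∃ B' : G.Walk v e, ∃ hey : G.Adj e y, B = B'.concat hey :=
    ⟨_, _, _, (B.concat_dropLast (B.adj_penultimate (not_nil_of_ne hvy))).symm⟩
  have hyB' : y ∉ B'.support := ((concat_isPath_iff hey).1 hF.isPath_right).2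
  have hXC : ∀ u ∈ {u | u ∈ I.support} ∪ {u | u ∈ (A.reverse.append B').support}, u ∈ C →
      u ∈ P.support ∧ u ≠ s ∧ u ≠ t := by
    rintro u (hu | hu) huC
    · exact (hI u).1 hu
    · rcases (mem_support_append_iff _ _).1 hu with hu | hu
      · rw [support_reverse, List.mem_reverse] at hu
        obtain rfl := hF.eq_of_mem_left u hu huC
        exact ⟨hx, hxs, hxt⟩
      · obtain rfl := hF.eq_of_mem_right u (by simp [hu]) huC
        exact absurd hu hyB'
  refine isMinor_K4_sup_edge_of_connected hst
    (induce_union_connected I.connected_induce_support.preconnected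
      (A.reverse.append B').connected_induce_support.preconnected
      ⟨x, (hI x).2 ⟨hx, hxs, hxt⟩, (A.reverse.append B').start_mem_support⟩)
    J.connected_induce_support ?_ (fun h => (hXC s h (hQC s Q.start_mem_support)).2.1 rfl)
    (fun h => (hXC t h (hQC t Q.end_mem_support)).2.2 rfl) (fun h => ((hJ s).1 h).2.1 rfl)
    (fun h => ((hJ t).1 h).2.2 rfl) ⟨a, .inl I.start_mem_support, hsa⟩
    ⟨b, .inl I.end_mem_support, hbt.symm⟩ ⟨c, J.start_mem_support, hsc⟩
    ⟨d, J.end_mem_support, hdt.symm⟩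
    ⟨e, .inr (A.reverse.append B').end_mem_support, y, (hJ y).2 ⟨hy, hys, hyt⟩, hey⟩
  rw [Set.disjoint_left]
  intro u hu huJ
  obtain ⟨huQ, hus, hut⟩ := (hJ u).1 huJ
  exact (hPQ u (hXC u hu (hQC u huQ)).1 huQ).elim hus hut

variable [DecidableEq V]

theorem isFan_append_of_common_end {C : Set V} {R₁ R₂ : G.Walk v z} (hR₁ : R₁.IsPath)
    (hR₂ : R₂.IsPath) (hzC : z ∈ C) (hR₁C : ∀ u ∈ R₁.support, u ∈ C → u = z)
    (hR₂C : ∀ u ∈ R₂.support, u ∈ C → u = z)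
    (hR : ∀ u ∈ R₁.support, u ∈ R₂.support → u = v ∨ u = z) {W : G.Walk x y} (hW : W.IsPath)
    (hx : x ∈ R₁.support) (hxz : x ≠ z) (hyC : y ∈ C) (hyz : y ≠ z)
    (hWR : ∀ u ∈ W.support, u ∈ R₁.support ∨ u ∈ R₂.support → u = x)
    (hWC : ∀ u ∈ W.support, u ∈ C → u = y) :
    IsFan C ((R₁.takeUntil x hx).append W) R₂ := by
  have hR₁x : (R₁.takeUntil x hx).support ⊆ R₁.support := R₁.support_takeUntil_subset_support hx
  have hzR₁x : z ∉ (R₁.takeUntil x hx).support :=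
    fun h => hxz (hR₁.eq_of_end_mem_takeUntil hx h).symm
  refine ⟨(hR₁.takeUntil hx).append hW fun u hu hW => hWR u hW (.inl (hR₁x hu)), hR₂, hyz,
    hyC, hzC, fun u hu huC => ?_, hR₂C, fun u hu hu₂ => ?_⟩
  · rcases (mem_support_append_iff _ _).1 hu with hu | hu
    · exact absurd (hR₁C u (hR₁x hu) huC ▸ hu) hzR₁x
    · exact hWC u hu huC
  · rcases (mem_support_append_iff _ _).1 hu with hu | hu
    · exact (hR u (hR₁x hu) hu₂).resolve_right fun h => hzR₁x (h ▸ hu)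
    · obtain rfl := hWR u hu (.inr hu₂)
      exact (hR u hx hu₂).resolve_right hxz

namespace Walk.IsInternallyDisjoint

variable {P Q : G.Walk s t} {C : Set V} {A : G.Walk v x} {B : G.Walk v y}

theorem exists_through_of_isFan_of_mem_dropUntil (hP : P.IsPath)
    (hPQ : P.IsInternallyDisjoint Q) (hPC : ∀ u ∈ P.support, u ∈ C)
    (hQC : ∀ u ∈ Q.support, u ∈ C) (hF : IsFan C A B) (hx : x ∈ P.support)
    (hy : y ∈ (P.dropUntil x hx).support) :
    ∃ p : G.Walk s t, p.IsPath ∧ v ∈ p.support ∧ p.IsInternallyDisjoint Q := by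
  set W₁ := P.takeUntil x hx
  set D := P.dropUntil x hx
  set W₃ := D.dropUntil y hy
  have hD : D.IsPath := hP.dropUntil hx
  have hW₁P : W₁.support ⊆ P.support := P.support_takeUntil_subset_support hx
  have hW₃D : W₃.support ⊆ D.support := D.support_dropUntil_subset_support hy
  have hW₃P : W₃.support ⊆ P.support :=
    List.Subset.trans hW₃D (P.support_dropUntil_subset_support hx)
  have hW₁W₃ : ∀ u ∈ W₁.support, u ∈ W₃.support → u = x :=
    fun u h₁ h₃ => hP.eq_of_mem_takeUntil_of_mem_dropUntil hx h₁ (hW₃D h₃)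
  have hxW₃ : x ∉ W₃.support := fun h => hF.ne (hD.eq_of_start_mem_dropUntil hy h)
  have hBW₃ : (B.append W₃).IsPath := hF.isPath_right.append (hD.dropUntil hy)
    fun u hu h => hF.eq_of_mem_right u hu (hPC u (hW₃P h))
  have hABW₃ : (A.reverse.append (B.append W₃)).IsPath :=
    hF.isPath_left.reverse.append hBW₃ fun u hu h => by
      rw [support_reverse, List.mem_reverse] at hu
      rcases (mem_support_append_iff _ _).1 h with h | h
      · exact hF.eq_of_mem_left_right u hu h
      · exact absurd (hF.eq_of_mem_left u hu (hPC u (hW₃P h)) ▸ h) hxW₃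
  refine ⟨W₁.append (A.reverse.append (B.append W₃)), (hP.takeUntil hx).append hABW₃ ?_,
    by simp, ?_⟩
  · intro u hu h
    simp only [mem_support_append_iff, support_reverse, List.mem_reverse] at h
    rcases h with h | h | h
    · exact hF.eq_of_mem_left u h (hPC u (hW₁P hu))
    · obtain rfl := hF.eq_of_mem_right u h (hPC u (hW₁P hu))
      exact absurd (hW₁W₃ u hu W₃.start_mem_support) hF.ne.symm
    · exact hW₁W₃ u hu h
  · intro u hu hQ
    simp only [mem_support_append_iff, support_reverse, List.mem_reverse] at hu
    rcases hu with h | h | h | h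
    · exact hPQ u (hW₁P h) hQ
    · obtain rfl := hF.eq_of_mem_left u h (hQC u hQ)
      exact hPQ u hx hQ
    · obtain rfl := hF.eq_of_mem_right u h (hQC u hQ)
      exact hPQ u (hW₃P W₃.start_mem_support) hQ
    · exact hPQ u (hW₃P h) hQ

theorem exists_through_of_isFan (hP : P.IsPath) (hPQ : P.IsInternallyDisjoint Q)
    (hPC : ∀ u ∈ P.support, u ∈ C) (hQC : ∀ u ∈ Q.support, u ∈ C) (hF : IsFan C A B)
    (hx : x ∈ P.support) (hy : y ∈ P.support) :
    ∃ p : G.Walk s t, p.IsPath ∧ v ∈ p.support ∧ p.IsInternallyDisjoint Q := by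
  rcases P.mem_support_dropUntil_or hx hy hF.ne with h | h
  · exact hPQ.exists_through_of_isFan_of_mem_dropUntil hP hPC hQC hF hx h
  · exact hPQ.exists_through_of_isFan_of_mem_dropUntil hP hPC hQC hF.symm hy h

theorem exists_through_or_isMinor_K4 (hP : P.IsPath) (hQ : Q.IsPath)
    (hPQ : P.IsInternallyDisjoint Q) (hst : s ≠ t)
    (hF : IsFan ({u | u ∈ P.support} ∪ {u | u ∈ Q.support}) A B) :
    (∃ p q : G.Walk s t, p.IsPath ∧ q.IsPath ∧ v ∈ p.support ∧ p.IsInternallyDisjoint q) ∨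
      IsMinor (⊤ : SimpleGraph (Fin 4)) (G ⊔ fromEdgeSet {s(s, t)}) := by
  wlog hxP : x ∈ P.support generalizing P Q
  · exact this hQ hP hPQ.symm (Set.union_comm _ _ ▸ hF) (hF.mem_left.resolve_left hxP)
  have hPC : ∀ u ∈ P.support, u ∈ {u | u ∈ P.support} ∪ {u | u ∈ Q.support} := fun _ => .inl
  have hQC : ∀ u ∈ Q.support, u ∈ {u | u ∈ P.support} ∪ {u | u ∈ Q.support} := fun _ => .inr
  by_cases hyP : y ∈ P.support
  · obtain ⟨p, hp, hvp, hpQ⟩ := hPQ.exists_through_of_isFan hP hPC hQC hF hxP hyP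
    exact .inl ⟨p, Q, hp, hQ, hvp, hpQ⟩
  have hyQ : y ∈ Q.support := hF.mem_right.resolve_left hyP
  by_cases hxQ : x ∈ Q.support
  · obtain ⟨p, hp, hvp, hpP⟩ := hPQ.symm.exists_through_of_isFan hQ hQC hPC hF hxQ hyQ
    exact .inl ⟨p, P, hp, hP, hvp, hpP⟩
  · exact .inr (hPQ.isMinor_K4_of_isFan hP hQ hst hQC hF hxP hxQ hyQ hyP)

end Walk.IsInternallyDisjoint

end SimpleGraph

namespace TwoConnected

open SimpleGraph Walk

variable {V : Type*} [Fintype V] {G : SimpleGraph V} {s t u v w x z : V}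

theorem exists_walk_avoiding (h : TwoConnected G) (hux : u ≠ x) (hvx : v ≠ x) :
    ∃ p : G.Walk u v, x ∉ p.support := by
  obtain ⟨p⟩ := h.2.2 x ⟨u, by simp [hux]⟩ ⟨v, by simp [hvx]⟩
  refine ⟨(p.map (Subgraph.hom _)).copy rfl rfl, fun hx => ?_⟩
  replace hx : x ∈ (p.map (Subgraph.hom _)).support := hx
  rw [Walk.support_map, List.mem_map] at hx
  obtain ⟨⟨y, hy⟩, -, hyx⟩ := hx
  exact hy.2 hyx

variable [DecidableEq V]

theorem exists_isInternallyDisjoint_of_adj (h : TwoConnected G) {P Q : G.Walk s w}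
    (hP : P.IsPath) (hQ : Q.IsPath) (hPQ : P.IsInternallyDisjoint Q) (hsw : s ≠ w)
    (hwt : G.Adj w t) (hts : t ≠ s) :
    ∃ p q : G.Walk s t, p.IsPath ∧ q.IsPath ∧ p.IsInternallyDisjoint q := by
  obtain ⟨T, hwT⟩ := h.exists_walk_avoiding hwt.ne.symm hsw
  obtain ⟨z, hz, T', hT', hT'T, hT'PQ⟩ :=
    T.exists_isPath_to_set (S := {u | u ∈ P.support ∨ u ∈ Q.support}) (.inl P.start_mem_support)
  have hwT' : w ∉ T'.support := fun h => hwT (hT'T h)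
  have hzw : z ≠ w := by
    rintro rfl
    exact hwT' T'.end_mem_support
  rcases hz with hz | hz
  · exact hPQ.extend hP hQ hwt hts hT' hz hzw hT'PQ hwT'
  · exact hPQ.symm.extend hQ hP hwt hts hT' hz hzw (fun u hu h => hT'PQ u hu h.symm) hwT'

theorem exists_isInternallyDisjoint (h : TwoConnected G) (hst : s ≠ t) :
    ∃ p q : G.Walk s t, p.IsPath ∧ q.IsPath ∧ p.IsInternallyDisjoint q := by
  obtain ⟨W⟩ := h.2.1.preconnected s t
  revert hst
  induction W using Walk.concatRec with
  | Hnil => exact fun hst => absurd rfl hst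
  | @Hconcat s w t p hwt ih =>
    intro hst
    by_cases hsw : s = w
    · subst hsw
      have hp : (cons hwt nil).IsPath := by simp [hst]
      exact ⟨cons hwt nil, cons hwt nil, hp, hp, fun u hu _ => by simpa using hu⟩
    · obtain ⟨P, Q, hP, hQ, hPQ⟩ := ih hsw
      exact h.exists_isInternallyDisjoint_of_adj hP hQ hPQ hsw hwt hst.symm

-- A path from `v` to `C` avoiding `z` leaves `R₁ ∪ R₂` for the last time at some `a ≠ z` and
-- then first meets `C` at some `b ≠ z`; the `Rᵢ` through `a`, cut at `a` and continued along
-- this path to `b`, is the second branch of the fan.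
theorem exists_isFan_of_common_end (h : TwoConnected G) {C : Set V} (hC : C.Nontrivial)
    (hv : v ∉ C) {R₁ R₂ : G.Walk v z} (hR₁ : R₁.IsPath) (hR₂ : R₂.IsPath) (hzC : z ∈ C)
    (hR₁C : ∀ u ∈ R₁.support, u ∈ C → u = z) (hR₂C : ∀ u ∈ R₂.support, u ∈ C → u = z)
    (hR : ∀ u ∈ R₁.support, u ∈ R₂.support → u = v ∨ u = z) :
    ∃ x y, ∃ (A : G.Walk v x) (B : G.Walk v y), IsFan C A B := by
  obtain ⟨w, hwC, hwz⟩ := hC.exists_ne z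
  obtain ⟨T, hzT⟩ := h.exists_walk_avoiding (fun hvz : v = z => hv (hvz ▸ hzC)) hwz
  obtain ⟨a, ha, b, hbC, W, hW, hWT, hWR, hWC⟩ := T.exists_isPath_between_sets
    (S := {u | u ∈ R₁.support ∨ u ∈ R₂.support}) (.inl R₁.start_mem_support) hwC
  have haz : a ≠ z := by
    rintro rfl
    exact hzT (hWT W.start_mem_support)
  have hbz : b ≠ z := by
    rintro rfl
    exact hzT (hWT W.end_mem_support)
  rcases ha with ha | ha
  · exact ⟨_, _, _, _, isFan_append_of_common_end hR₁ hR₂ hzC hR₁C hR₂C hR hW ha haz hbC hbz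
      hWR hWC⟩
  · exact ⟨_, _, _, _, (isFan_append_of_common_end hR₂ hR₁ hzC hR₂C hR₁C
      (fun u h₂ h₁ => hR u h₁ h₂) hW ha haz hbC hbz (fun u hu h => hWR u hu h.symm) hWC).symm⟩

theorem exists_isFan (h : TwoConnected G) {C : Set V} (hC : C.Nontrivial) (hv : v ∉ C) :
    ∃ x y, ∃ (A : G.Walk v x) (B : G.Walk v y), IsFan C A B := by
  obtain ⟨s, hs⟩ := hC.nonempty
  obtain ⟨D₁, D₂, -, -, hD⟩ := h.exists_isInternallyDisjoint fun hvs : v = s => hv (hvs ▸ hs)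
  obtain ⟨z₁, hz₁, R₁, hR₁, hR₁D, hR₁C⟩ := D₁.exists_isPath_to_set hs
  obtain ⟨z₂, hz₂, R₂, hR₂, hR₂D, hR₂C⟩ := D₂.exists_isPath_to_set hs
  have hR : ∀ u ∈ R₁.support, u ∈ R₂.support → u = v ∨ u = s :=
    fun u h₁ h₂ => hD u (hR₁D h₁) (hR₂D h₂)
  by_cases hz : z₁ = z₂
  · subst hz
    refine h.exists_isFan_of_common_end hC hv hR₁ hR₂ hz₁ hR₁C hR₂C fun u h₁ h₂ => ?_
    exact (hR u h₁ h₂).imp_right fun hus : u = s => hR₁C u h₁ (hus ▸ hs)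
  · refine ⟨z₁, z₂, R₁, R₂, hR₁, hR₂, hz, hz₁, hz₂, hR₁C, hR₂C, fun u h₁ h₂ => ?_⟩
    refine (hR u h₁ h₂).resolve_right ?_
    rintro rfl
    exact hz ((hR₁C u h₁ hs).symm.trans (hR₂C u h₂ hs))

end TwoConnected

/-- In a parallel SP-network `G` with source `s` and sink `t` (here: `G` itself
is 2-connected and `G + st` has no `K₄` minor), for every internal vertex `v`
there are two internally disjoint `s`–`t` paths, one of them through `v`. -/
theorem parallel_sp_two_paths {V : Type*} [Fintype V]
    (G : SimpleGraph V) (s t : V) (hst : s ≠ t)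
    (hSP : ¬ IsMinor (⊤ : SimpleGraph (Fin 4)) (G ⊔ SimpleGraph.fromEdgeSet {s(s, t)}))
    (h2c : TwoConnected G) :
    ∀ v : V, v ≠ s → v ≠ t →
      ∃ p q : G.Walk s t, p.IsPath ∧ q.IsPath ∧ v ∈ p.support ∧
        {x | x ∈ p.support} ∩ {x | x ∈ q.support} = ({s, t} : Set V) := by
  classical
  intro v _ _
  obtain ⟨P, Q, hP, hQ, hPQ⟩ := h2c.exists_isInternallyDisjoint hst
  suffices ∃ p q : G.Walk s t, p.IsPath ∧ q.IsPath ∧ v ∈ p.support ∧ p.IsInternallyDisjoint q by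
    obtain ⟨p, q, hp, hq, hvp, hpq⟩ := this
    exact ⟨p, q, hp, hq, hvp, hpq.inter_eq⟩
  by_cases hvPQ : v ∈ {u | u ∈ P.support} ∪ {u | u ∈ Q.support}
  · rcases hvPQ with hvP | hvQ
    · exact ⟨P, Q, hP, hQ, hvP, hPQ⟩
    · exact ⟨Q, P, hQ, hP, hvQ, hPQ.symm⟩
  obtain ⟨x, y, A, B, hF⟩ :=
    h2c.exists_isFan ⟨s, .inl P.start_mem_support, t, .inl P.end_mem_support, hst⟩ hvPQ
  exact (hPQ.exists_through_or_isMinor_K4 hP hQ hst hF).resolve_right hSP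
end

section
/- The exponential generating function $R(x) = \sum_{n \ge 1} n^{n-1} x^n / n!$ of rooted labelled trees satisfies $R(x) = x e^{R(x)}$ for $|x| < e^{-1}$, and $R$ is the unique power series solution $y(x)$ of $y = x e^y$ with $y(0) = 0$. -/
/-!
Uniqueness is triangularity: the coefficient of `x^(k+1)` in `x * e^y` depends only on the
coefficients of `y` below `x^(k+1)`, so two solutions of `y = x e^y` agree modulo every `x^N`.

For existence write `T = x F` with `F = ∑ (n+1)^(n-1) xⁿ/n!`. The series `e^T` is the only `G` with
`G' = G T'` and `G(0) = 1`, so it suffices that `F' = F T'`; coefficientwise this is Abel's identity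
`∑_{i+j=n} C(n,i) (1+i)^(i-1) (y+j)^j = (y+n+1)^n` at `y = 1`. Both sides of Abel's identity are
polynomials in `y`: differentiating in `y` lowers `n + 1` to `n`, and at `y = -(n+2)` the left side
is the `(n+1)`-st finite difference of `k ↦ (1+k)^n`, hence zero.

Analytically, `n^(n-1)/n! ≤ eⁿ`, so for `|x| < e⁻¹` the double series `∑ₙ ∑ₘ [xᵐ]Tⁿ xᵐ / n!`
converges absolutely, and summing it in both orders gives `exp (T(x)) = ∑ₘ [xᵐ]e^T xᵐ`.
-/

open Nat

/-- The exponential of a formal power series with zero constant term, defined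
coefficientwise by `exp y = ∑ yⁿ/n!` (the truncation at `n = k` is exact for the
`k`-th coefficient when `y` has zero constant term). -/
noncomputable def expPS (y : PowerSeries ℝ) : PowerSeries ℝ :=
  PowerSeries.mk fun k =>
    ∑ n ∈ Finset.range (k + 1), PowerSeries.coeff k (y ^ n) / (n ! : ℝ)

/-- The exponential generating function of rooted labelled (Cayley) trees,
`R(x) = ∑_{n ≥ 1} n^(n-1) xⁿ / n!`, as a formal power series. -/
noncomputable def treeSeries : PowerSeries ℝ :=
  PowerSeries.mk fun n => if n = 0 then 0 else (n : ℝ) ^ (n - 1) / (n ! : ℝ)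

open Finset

theorem one_add_pow_pred_mul_pow {R : Type*} [CommSemiring R] (i j : ℕ) :
    (1 + i : R) ^ (i - 1) * (1 + i) ^ j = (1 + i) ^ (i + j - 1) := by
  rcases i with _ | i
  · simp
  · rw [← pow_add]
    congr 1
    omega

section Abel

open Polynomial

namespace Polynomial

variable {R : Type*} [CommRing R]

/-- At `p.1 = 0` the exponent `p.1 - 1` truncates to `0`, which is harmless as the base is `1`. -/
noncomputable def abelPoly (n : ℕ) : R[X] :=
  ∑ p ∈ antidiagonal n,
    C ((n.choose p.1 : R) * (1 + p.1 : R) ^ (p.1 - 1)) * (X + C (p.2 : R)) ^ p.2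

theorem derivative_abelPoly_succ (n : ℕ) :
    derivative (abelPoly (n + 1) : R[X]) = C ((n : R) + 1) * (abelPoly n).comp (X + 1) := by
  rw [abelPoly, abelPoly, Nat.sum_antidiagonal_succ', derivative_add, derivative_sum, pow_zero,
    mul_one, derivative_C, zero_add, sum_comp, mul_sum]
  refine sum_congr rfl fun p hp => ?_
  have hchoose : ((n + 1).choose p.1 : R) * ((p.2 : R) + 1) = ((n : R) + 1) * n.choose p.1 := by
    have h := Nat.choose_mul_succ_eq n p.1
    rw [show n + 1 - p.1 = p.2 + 1 by rw [HasAntidiagonal.mem_antidiagonal] at hp; omega] at h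
    simpa [mul_comm] using congrArg (Nat.cast : ℕ → R) h.symm
  simp only [derivative_C_mul, derivative_X_add_C_pow, mul_comp, C_comp, pow_comp, add_comp,
    X_comp, Nat.add_sub_cancel]
  rw [← mul_assoc, ← C_mul, ← mul_assoc, ← C_mul]
  congr 2
  · push_cast
    linear_combination (1 + (p.1 : R)) ^ (p.1 - 1) * hchoose
  · push_cast
    rw [C_add, C_1]
    ring

theorem eval_abelPoly_succ (n : ℕ) : (abelPoly (n + 1) : R[X]).eval (-((n : R) + 2)) = 0 := by
  have hterm : ∀ p ∈ antidiagonal (n + 1),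
      (C (((n + 1).choose p.1 : R) * (1 + p.1 : R) ^ (p.1 - 1)) * (X + C (p.2 : R)) ^ p.2).eval
        (-((n : R) + 2)) =
      ((-1 : ℤ) ^ (n + 1 - p.1) * (n + 1).choose p.1) • (1 + (p.1 : R)) ^ n := by
    intro p hp
    rw [HasAntidiagonal.mem_antidiagonal] at hp
    have hn : (n : R) + 1 = p.1 + p.2 := by rw [← Nat.cast_add_one, ← hp, Nat.cast_add]
    have hbase : -((n : R) + 2) + p.2 = -1 * (1 + p.1) := by linear_combination -hn
    have hpow : (1 + p.1 : R) ^ n = (1 + p.1) ^ (p.1 - 1) * (1 + p.1) ^ p.2 := by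
      rw [one_add_pow_pred_mul_pow, show p.1 + p.2 - 1 = n by omega]
    rw [eval_mul, eval_C, eval_pow, eval_add, eval_X, eval_C, hbase, mul_pow, zsmul_eq_mul,
      show n + 1 - p.1 = p.2 by omega, hpow]
    push_cast
    ring
  have hdiff := fwdDiff_iter_eq_sum_shift (1 : R) (fun r : R => r ^ n) (n + 1) 1
  rw [fwdDiff_iter_pow_eq_zero_of_lt (Nat.lt_succ_self n), Pi.zero_apply] at hdiff
  rw [abelPoly, eval_finsetSum, sum_congr rfl hterm, Nat.sum_antidiagonal_eq_sum_range_succ_mk,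
    hdiff]
  simp [add_comm]

theorem abelPoly_eq [IsAddTorsionFree R] (n : ℕ) :
    (abelPoly n : R[X]) = (X + C ((n : R) + 1)) ^ n := by
  induction n with
  | zero => simp [abelPoly]
  | succ n ih =>
    set D : R[X] := abelPoly (n + 1) - (X + C (((n + 1 : ℕ) : R) + 1)) ^ (n + 1)
    have hD : derivative D = 0 := by
      rw [derivative_sub, derivative_abelPoly_succ, ih, derivative_X_add_C_pow, pow_comp,
        add_comp, X_comp, C_comp, add_assoc, ← C_1, ← C_add]
      push_cast
      ring_nf
    have hroot : D.eval (-((n : R) + 2)) = 0 := by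
      rw [eval_sub, eval_abelPoly_succ, eval_pow, eval_add, eval_X, eval_C]
      push_cast
      ring
    rw [eq_C_of_derivative_eq_zero hD, eval_C] at hroot
    suffices D = 0 from sub_eq_zero.mp this
    rw [eq_C_of_derivative_eq_zero hD, hroot, C_0]

end Polynomial

theorem abel_identity {R : Type*} [CommRing R] [IsAddTorsionFree R] (n : ℕ) (y : R) :
    ∑ p ∈ antidiagonal n, (n.choose p.1 : R) * (1 + p.1) ^ (p.1 - 1) * (y + p.2) ^ p.2 =
      (y + n + 1) ^ n := by
  simpa [abelPoly, eval_finsetSum, add_assoc] using congrArg (eval y) (abelPoly_eq (R := R) n)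

end Abel

open PowerSeries

namespace PowerSeries

theorem coeff_pow_eq_zero_of_lt {R : Type*} [CommSemiring R] {y : R⟦X⟧}
    (hy : constantCoeff y = 0) {k n : ℕ} (h : k < n) : coeff k (y ^ n) = 0 :=
  X_pow_dvd_iff.mp (pow_dvd_pow_of_dvd (X_dvd_iff.mpr hy) n) k h

theorem eq_of_derivative_eq_mul {R : Type*} [CommRing R] [IsAddTorsionFree R] {F G g : R⟦X⟧}
    (hF : d⁄dX R F = F * g) (hG : d⁄dX R G = G * g) (h0 : constantCoeff F = constantCoeff G) :
    F = G := by
  rw [← sub_eq_zero]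
  set D := F - G
  have hD : d⁄dX R D = D * g := by rw [map_sub, hF, hG, sub_mul]
  ext n
  induction n using Nat.strong_induction_on with
  | _ n ih =>
    rcases n with _ | k
    · simpa [D, sub_eq_zero] using h0
    · have hk : coeff k (d⁄dX R D) = 0 := by
        rw [hD, coeff_mul]
        refine sum_eq_zero fun p hp => ?_
        rw [ih p.1 (by have := HasAntidiagonal.mem_antidiagonal.mp hp; omega), map_zero, zero_mul]
      rw [coeff_derivative, mul_comm, ← Nat.cast_add_one, ← nsmul_eq_mul,
        nsmul_eq_zero_iff_right k.succ_ne_zero] at hk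
      simpa using hk

section Evaluation

variable {R : Type*} [NormedCommRing R] {f g : R⟦X⟧} {x : R}

theorem coeff_mul_mul_pow (f g : R⟦X⟧) (x : R) (m : ℕ) :
    coeff m (f * g) * x ^ m =
      ∑ p ∈ antidiagonal m, coeff p.1 f * x ^ p.1 * (coeff p.2 g * x ^ p.2) := by
  rw [coeff_mul, sum_mul]
  refine sum_congr rfl fun p hp => ?_
  rw [← HasAntidiagonal.mem_antidiagonal.mp hp, pow_add]
  ring

theorem summable_norm_coeff_mul_mul_pow (hf : Summable fun m => ‖coeff m f * x ^ m‖)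
    (hg : Summable fun m => ‖coeff m g * x ^ m‖) :
    Summable fun m => ‖coeff m (f * g) * x ^ m‖ :=
  (summable_norm_sum_mul_antidiagonal_of_summable_norm hf hg).congr fun m => by
    rw [coeff_mul_mul_pow]

theorem tsum_norm_coeff_mul_mul_pow_le (hf : Summable fun m => ‖coeff m f * x ^ m‖)
    (hg : Summable fun m => ‖coeff m g * x ^ m‖) :
    ∑' m, ‖coeff m (f * g) * x ^ m‖ ≤
      (∑' m, ‖coeff m f * x ^ m‖) * ∑' m, ‖coeff m g * x ^ m‖ := by
  have hfg : Summable fun p : ℕ × ℕ => ‖coeff p.1 f * x ^ p.1‖ * ‖coeff p.2 g * x ^ p.2‖ :=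
    hf.mul_of_nonneg hg (fun _ => norm_nonneg _) fun _ => norm_nonneg _
  rw [hf.tsum_mul_tsum_eq_tsum_sum_antidiagonal hg hfg]
  have hle (m : ℕ) : ‖coeff m (f * g) * x ^ m‖ ≤
      ∑ p ∈ antidiagonal m, ‖coeff p.1 f * x ^ p.1‖ * ‖coeff p.2 g * x ^ p.2‖ := by
    rw [coeff_mul_mul_pow]
    exact (norm_sum_le _ _).trans (sum_le_sum fun p _ => norm_mul_le _ _)
  exact (summable_norm_coeff_mul_mul_pow hf hg).tsum_le_tsum hle
    (summable_sum_mul_antidiagonal_of_summable_mul (f := fun m => ‖coeff m f * x ^ m‖)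
      (g := fun m => ‖coeff m g * x ^ m‖) hfg)

theorem tsum_coeff_mul_mul_pow [CompleteSpace R] (hf : Summable fun m => ‖coeff m f * x ^ m‖)
    (hg : Summable fun m => ‖coeff m g * x ^ m‖) :
    ∑' m, coeff m (f * g) * x ^ m = (∑' m, coeff m f * x ^ m) * ∑' m, coeff m g * x ^ m := by
  simp only [coeff_mul_mul_pow, tsum_mul_tsum_eq_tsum_sum_antidiagonal_of_summable_norm hf hg]

theorem summable_norm_coeff_pow_mul_pow (hf : Summable fun m => ‖coeff m f * x ^ m‖) (n : ℕ) :
    Summable fun m => ‖coeff m (f ^ n) * x ^ m‖ := by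
  induction n with
  | zero =>
    refine summable_of_ne_finset_zero (s := {0}) fun m hm => ?_
    rw [Finset.mem_singleton] at hm
    simp [coeff_one, hm]
  | succ n ih =>
    rw [_root_.pow_succ]
    exact summable_norm_coeff_mul_mul_pow ih hf

theorem tsum_norm_coeff_pow_mul_pow_le [NormOneClass R]
    (hf : Summable fun m => ‖coeff m f * x ^ m‖) (n : ℕ) :
    ∑' m, ‖coeff m (f ^ n) * x ^ m‖ ≤ (∑' m, ‖coeff m f * x ^ m‖) ^ n := by
  induction n with
  | zero =>
    rw [pow_zero, tsum_eq_single 0 fun m hm => by simp [coeff_one, hm]]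
    simp
  | succ n ih =>
    rw [_root_.pow_succ, _root_.pow_succ]
    exact (tsum_norm_coeff_mul_mul_pow_le (summable_norm_coeff_pow_mul_pow hf n) hf).trans
      (mul_le_mul_of_nonneg_right ih (tsum_nonneg fun _ => norm_nonneg _))

theorem tsum_coeff_pow_mul_pow [CompleteSpace R] (hf : Summable fun m => ‖coeff m f * x ^ m‖)
    (n : ℕ) : ∑' m, coeff m (f ^ n) * x ^ m = (∑' m, coeff m f * x ^ m) ^ n := by
  induction n with
  | zero =>
    rw [pow_zero, tsum_eq_single 0 fun m hm => by simp [coeff_one, hm]]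
    simp
  | succ n ih =>
    rw [_root_.pow_succ, _root_.pow_succ, ← ih]
    exact tsum_coeff_mul_mul_pow (summable_norm_coeff_pow_mul_pow hf n) hf

theorem hasSum_coeff_X_mul_mul_pow {a : R} (h : HasSum (fun m => coeff m f * x ^ m) a) :
    HasSum (fun m => coeff m (X * f) * x ^ m) (x * a) := by
  rw [← hasSum_nat_add_iff' 1]
  simpa [coeff_succ_X_mul, _root_.pow_succ', mul_left_comm] using h.mul_left x

end Evaluation

end PowerSeries

theorem expPS_eq_subst_exp {y : PowerSeries ℝ} (hy : constantCoeff y = 0) :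
    expPS y = (exp ℝ).subst y := by
  ext k
  rw [expPS, coeff_mk, coeff_subst' (HasSubst.of_constantCoeff_zero' hy),
    finsum_eq_sum_of_support_subset (s := range (k + 1))]
  · simp [div_eq_inv_mul]
  · intro n hn
    by_contra h
    simp only [Function.mem_support, coe_range, Set.mem_Iio, not_lt] at hn h
    exact hn (by rw [coeff_pow_eq_zero_of_lt hy h, smul_zero])

theorem derivative_expPS {y : PowerSeries ℝ} (hy : constantCoeff y = 0) :
    d⁄dX ℝ (expPS y) = expPS y * d⁄dX ℝ y := by
  rw [expPS_eq_subst_exp hy, derivative_subst (HasSubst.of_constantCoeff_zero' hy),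
    derivative_exp]

theorem X_pow_dvd_expPS_sub {y z : PowerSeries ℝ} {N : ℕ} (h : X ^ N ∣ y - z) :
    X ^ N ∣ expPS y - expPS z := by
  refine X_pow_dvd_iff.mpr fun k hk => ?_
  have hpow (n : ℕ) : coeff k (y ^ n) = coeff k (z ^ n) := by
    rw [← sub_eq_zero, ← map_sub]
    exact X_pow_dvd_iff.mp (h.trans (sub_dvd_pow_sub_pow y z n)) k hk
  simp [expPS, hpow]

theorem eq_of_eq_X_mul_expPS {y z : PowerSeries ℝ} (hy : y = X * expPS y)
    (hz : z = X * expPS z) : y = z := by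
  have hdvd (N : ℕ) : X ^ N ∣ y - z := by
    induction N with
    | zero => simp
    | succ N ih =>
      rw [show y - z = X * (expPS y - expPS z) by rw [mul_sub, ← hy, ← hz], _root_.pow_succ']
      exact mul_dvd_mul_left X (X_pow_dvd_expPS_sub ih)
  ext n
  simpa [sub_eq_zero] using X_pow_dvd_iff.mp (hdvd (n + 1)) n (lt_add_one n)

theorem hasSum_coeff_expPS_mul_pow {y : PowerSeries ℝ} {x : ℝ} (hy : constantCoeff y = 0)
    (hs : Summable fun m => ‖coeff m y * x ^ m‖) :
    HasSum (fun m => coeff m (expPS y) * x ^ m) (Real.exp (∑' m, coeff m y * x ^ m)) := by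
  set T := ∑' m, coeff m y * x ^ m
  set P : ℕ × ℕ → ℝ := fun p => coeff p.2 (y ^ p.1) * x ^ p.2 / (p.1)!
  have hrow (n : ℕ) : HasSum (fun m => P (n, m)) (T ^ n / n !) := by
    rw [← tsum_coeff_pow_mul_pow hs]
    exact (summable_norm_coeff_pow_mul_pow hs n).of_norm.hasSum.div_const _
  have hcol (m : ℕ) : HasSum (fun n => P (n, m)) (coeff m (expPS y) * x ^ m) := by
    have hvanish : ∀ n ∉ range (m + 1), P (n, m) = 0 := fun n hn => by
      rw [mem_range, not_lt] at hn
      simp [P, coeff_pow_eq_zero_of_lt hy hn]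
    convert hasSum_sum_of_ne_finset_zero (L := SummationFilter.unconditional ℕ) hvanish using 1
    rw [expPS, coeff_mk, sum_mul]
    exact sum_congr rfl fun n _ => by simp only [P]; ring
  have hP : Summable P := by
    refine .of_norm ((summable_prod_of_nonneg fun _ => norm_nonneg _).mpr ⟨fun n => ?_, ?_⟩)
    · simpa [P, norm_div] using (summable_norm_coeff_pow_mul_pow hs n).div_const (n ! : ℝ)
    · refine (Real.summable_pow_div_factorial (∑' m, ‖coeff m y * x ^ m‖)).of_nonneg_of_le
        (fun n => tsum_nonneg fun _ => norm_nonneg _) fun n => ?_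
      simp only [P, norm_div, Real.norm_natCast]
      rw [tsum_div_const]
      gcongr
      exact tsum_norm_coeff_pow_mul_pow_le hs n
  have hexp : HasSum P (Real.exp T) := by
    rw [Real.exp_eq_exp_ℝ,
      (NormedSpace.expSeries_div_hasSum_exp T).unique (hP.hasSum.prod_fiberwise hrow)]
    exact hP.hasSum
  exact ((Equiv.prodComm ℕ ℕ).hasSum_iff.mpr hexp).prod_fiberwise hcol

/-- `(n+1)^(n-1)` counts rooted forests on `n` labelled vertices. -/
noncomputable def forestSeries : PowerSeries ℝ :=
  PowerSeries.mk fun n => ((n : ℝ) + 1) ^ (n - 1) / (n ! : ℝ)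

theorem constantCoeff_treeSeries : constantCoeff treeSeries = 0 := by
  simp [treeSeries, ← coeff_zero_eq_constantCoeff_apply]

theorem treeSeries_eq_X_mul_forestSeries : treeSeries = X * forestSeries := by
  ext n
  rcases n with _ | n
  · simp [treeSeries]
  · rw [coeff_succ_X_mul, treeSeries, forestSeries, coeff_mk, coeff_mk, if_neg n.succ_ne_zero,
      Nat.factorial_succ, Nat.add_sub_cancel]
    have h := one_add_pow_pred_mul_pow (R := ℝ) n 1
    rw [pow_one, show n + 1 - 1 = n by omega, add_comm (1 : ℝ)] at h
    push_cast
    rw [← h]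
    field_simp

theorem derivative_forestSeries :
    d⁄dX ℝ forestSeries = forestSeries * d⁄dX ℝ treeSeries := by
  ext k
  have hterm : ∀ p ∈ antidiagonal k, coeff p.1 forestSeries * coeff p.2 (d⁄dX ℝ treeSeries) =
      (k.choose p.1 : ℝ) * (1 + p.1) ^ (p.1 - 1) * (1 + p.2) ^ p.2 / k ! := by
    intro p hp
    rw [HasAntidiagonal.mem_antidiagonal] at hp
    have h := one_add_pow_pred_mul_pow (R := ℝ) p.2 1
    rw [pow_one, show p.2 + 1 - 1 = p.2 by omega] at h
    rw [coeff_derivative, treeSeries_eq_X_mul_forestSeries, coeff_succ_X_mul, forestSeries,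
      coeff_mk, coeff_mk, ← hp, Nat.cast_add_choose, ← h]
    field_simp
    ring
  rw [coeff_mul, sum_congr rfl hterm, ← sum_div, abel_identity, coeff_derivative, forestSeries,
    coeff_mk, Nat.factorial_succ, Nat.add_sub_cancel]
  push_cast
  field_simp
  ring

theorem expPS_treeSeries : expPS treeSeries = forestSeries :=
  eq_of_derivative_eq_mul (derivative_expPS constantCoeff_treeSeries) derivative_forestSeries
    (by rw [← coeff_zero_eq_constantCoeff_apply, ← coeff_zero_eq_constantCoeff_apply]
        simp [expPS, forestSeries])

theorem treeSeries_eq_X_mul_expPS : treeSeries = X * expPS treeSeries := by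
  rw [expPS_treeSeries, ← treeSeries_eq_X_mul_forestSeries]

theorem coeff_treeSeries_nonneg (n : ℕ) : 0 ≤ coeff n treeSeries := by
  rw [treeSeries, coeff_mk]
  split_ifs <;> positivity

theorem coeff_treeSeries_le (n : ℕ) : coeff n treeSeries ≤ Real.exp 1 ^ n := by
  rw [treeSeries, coeff_mk]
  split_ifs with hn
  · positivity
  · calc (n : ℝ) ^ (n - 1) / n ! ≤ (n : ℝ) ^ n / n ! := by
          gcongr
          · exact_mod_cast Nat.one_le_iff_ne_zero.mpr hn
          · omega
      _ ≤ Real.exp 1 ^ n := by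
          rw [Real.exp_one_pow]
          exact Real.pow_div_factorial_le_exp _ n.cast_nonneg n

theorem summable_norm_coeff_treeSeries_mul_pow {x : ℝ} (hx : |x| < Real.exp (-1)) :
    Summable fun m => ‖coeff m treeSeries * x ^ m‖ := by
  have hratio : Real.exp 1 * |x| < 1 := by
    calc Real.exp 1 * |x| < Real.exp 1 * Real.exp (-1) := by gcongr
      _ = 1 := by rw [← Real.exp_add, add_neg_cancel, Real.exp_zero]
  refine (summable_geometric_of_lt_one (by positivity) hratio).of_nonneg_of_le
    (fun _ => norm_nonneg _) fun m => ?_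
  rw [norm_mul, norm_pow, Real.norm_eq_abs, Real.norm_eq_abs,
    abs_of_nonneg (coeff_treeSeries_nonneg m), mul_pow]
  gcongr
  exact coeff_treeSeries_le m

/-- `R(x) = ∑ n^(n-1) xⁿ/n!` satisfies `R(x) = x e^(R x)` for `|x| < e⁻¹`, and
`R` is the unique formal power series solution of `y = x e^y` with `y(0) = 0`. -/
theorem tree_function_eq :
    (∀ x : ℝ, |x| < Real.exp (-1) →
      (∑' n : ℕ, ((n + 1 : ℝ) ^ n / ((n + 1)! : ℝ)) * x ^ (n + 1)) =
        x * Real.exp (∑' n : ℕ, ((n + 1 : ℝ) ^ n / ((n + 1)! : ℝ)) * x ^ (n + 1))) ∧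
    treeSeries = PowerSeries.X * expPS treeSeries ∧
    ∀ y : PowerSeries ℝ, PowerSeries.coeff 0 y = 0 →
      y = PowerSeries.X * expPS y → y = treeSeries := by
  refine ⟨fun x hx => ?_, treeSeries_eq_X_mul_expPS,
    fun y _ hy => eq_of_eq_X_mul_expPS hy treeSeries_eq_X_mul_expPS⟩
  set u := ∑' m, coeff m treeSeries * x ^ m
  have hT : HasSum (fun m => coeff m treeSeries * x ^ m) (x * Real.exp u) := by
    rw [treeSeries_eq_X_mul_expPS]
    exact hasSum_coeff_X_mul_mul_pow (hasSum_coeff_expPS_mul_pow constantCoeff_treeSeries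
      (summable_norm_coeff_treeSeries_mul_pow hx))
  have hu : u = x * Real.exp u := hT.tsum_eq
  have hS : HasSum (fun n : ℕ => ((n + 1 : ℝ) ^ n / ((n + 1)! : ℝ)) * x ^ (n + 1)) u := by
    rw [← hasSum_nat_add_iff' 1] at hT
    simpa [treeSeries, ← hu] using hT
  rw [hS.tsum_eq]
  exact hu
end

section
/- Let $G$ be a graph and let $T$ be a normal tree for $G$ rooted at $r$ (a rooted tree on vertex set $V(G)$ such that the endpoints of every edge of $G$ are comparable in the tree order). For $v \in V(G)$ let $a_T(v)$ be the number of active ancestors of $v$: vertices $u <_T v$ such that some $z \ge_T v$ has $uz \in E(G)$. Then the treewidth of $G$ equals the minimum over all normal trees $T$ for $G$ of $\max_{v} a_T(v)$. -/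
/-!
For a normal tree `T`, the bags `{v} ∪ a_T(v)` placed on `T` itself form a tree decomposition:
the bags containing `v` sit at `v` and at descendants `w` of `v` with `v ∈ a_T(w)`, and that set
is closed under moving up from `w` towards `v`.

Conversely, root a tree decomposition and order the vertices by the depth of their highest bag.
Two vertices sharing a bag then both lie in the highest bag of the later one, so the earlier
neighbours of each vertex `v` in the graph of bag-sharing pairs form a clique inside the highest
bag of `v`. Attaching every vertex to its latest earlier neighbour gives a normal tree in which
each active ancestor of `v` is an earlier neighbour of `v`, hence lies in that bag.
-/

/-- `(T, bag)` is a tree decomposition of `G`. -/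
def IsTreeDecomp {V : Type*} (G : SimpleGraph V) {m : ℕ}
    (T : SimpleGraph (Fin m)) (bag : Fin m → Set V) : Prop :=
  T.IsTree ∧ (∀ v : V, ∃ i, v ∈ bag i) ∧
    (∀ ⦃u v⦄, G.Adj u v → ∃ i, u ∈ bag i ∧ v ∈ bag i) ∧
    ∀ v : V, (T.induce {i | v ∈ bag i}).Connected

/-- The treewidth of `G`: the least `k` admitting a tree decomposition with all
bags of size at most `k + 1`. -/
noncomputable def treewidth {V : Type*} (G : SimpleGraph V) : ℕ :=
  sInf {k | ∃ (m : ℕ) (T : SimpleGraph (Fin m)) (bag : Fin m → Set V),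
    IsTreeDecomp G T bag ∧ ∀ i, (bag i).ncard ≤ k + 1}

/-- `u ≤_T v` in the tree order of `T` rooted at `r`: `u` lies on the path
from `r` to `v`. -/
def TreeLe {V : Type*} (T : SimpleGraph V) (r u v : V) : Prop :=
  ∃ p : T.Walk r v, p.IsPath ∧ u ∈ p.support

/-- `T` (rooted at `r`) is a normal tree for `G`: `T` is a tree on the vertex
set of `G` and the endpoints of every edge of `G` are comparable. -/
def IsNormalTreeFor {V : Type*} (G T : SimpleGraph V) (r : V) : Prop :=
  T.IsTree ∧ ∀ ⦃u v⦄, G.Adj u v → TreeLe T r u v ∨ TreeLe T r v u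

/-- The active ancestors of `v`: vertices `u <_T v` with an edge of `G` to some
`z ≥_T v`. -/
def activeAncestors {V : Type*} (G T : SimpleGraph V) (r v : V) : Set V :=
  {u | u ≠ v ∧ TreeLe T r u v ∧ ∃ z, TreeLe T r v z ∧ G.Adj u z}

open SimpleGraph Walk

section Treewidth

variable {V : Type*} {G : SimpleGraph V}

lemma treewidth_le_of_isTreeDecomp {m k : ℕ} {D : SimpleGraph (Fin m)} {bag : Fin m → Set V}
    (hD : IsTreeDecomp G D bag) (hk : ∀ i, (bag i).ncard ≤ k + 1) : treewidth G ≤ k :=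
  Nat.sInf_le ⟨m, D, bag, hD, hk⟩

lemma isTreeDecomp_univ (G : SimpleGraph V) :
    IsTreeDecomp G (⊥ : SimpleGraph (Fin 1)) fun _ => Set.univ := by
  refine ⟨.of_subsingleton, fun _ => ⟨0, trivial⟩, fun _ _ _ => ⟨0, trivial, trivial⟩,
    fun v => ?_⟩
  have : Nonempty {i : Fin 1 | v ∈ (Set.univ : Set V)} := ⟨⟨0, trivial⟩⟩
  exact IsTree.of_subsingleton.connected

lemma exists_isTreeDecomp_ncard_le_treewidth [Finite V] (G : SimpleGraph V) :
    ∃ (m : ℕ) (D : SimpleGraph (Fin m)) (bag : Fin m → Set V),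
      IsTreeDecomp G D bag ∧ ∀ i, (bag i).ncard ≤ treewidth G + 1 := by
  have hne : {k | ∃ (m : ℕ) (D : SimpleGraph (Fin m)) (bag : Fin m → Set V),
      IsTreeDecomp G D bag ∧ ∀ i, (bag i).ncard ≤ k + 1}.Nonempty :=
    ⟨Nat.card V, 1, ⊥, _, isTreeDecomp_univ G, fun _ => by simp⟩
  exact Nat.sInf_mem hne

end Treewidth

lemma SimpleGraph.IsAcyclic.eq_of_isPath {V : Type*} {G : SimpleGraph V} (hG : G.IsAcyclic)
    {u v : V} {p q : G.Walk u v} (hp : p.IsPath) (hq : q.IsPath) : p = q :=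
  Subtype.ext_iff.1 ((hG.subsingleton_path u v).elim ⟨p, hp⟩ ⟨q, hq⟩)

lemma SimpleGraph.IsAcyclic.length_eq_dist {V : Type*} {G : SimpleGraph V} (hG : G.IsAcyclic)
    {u v : V} {p : G.Walk u v} (hp : p.IsPath) : p.length = G.dist u v := by
  obtain ⟨q, hq, hlen⟩ := p.reachable.exists_path_of_dist
  rw [← hlen, hG.eq_of_isPath hp hq]

section TreeOrder

variable {V : Type*} {T : SimpleGraph V} {r u v w x : V}

lemma treeLe_iff_mem_support (hT : T.IsAcyclic) {p : T.Walk r v} (hp : p.IsPath) :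
    TreeLe T r u v ↔ u ∈ p.support := by
  refine ⟨fun ⟨q, hq, hu⟩ => ?_, fun hu => ⟨p, hp, hu⟩⟩
  rwa [hT.eq_of_isPath hq hp] at hu

lemma treeLe_refl (h : T.Reachable r v) : TreeLe T r v v :=
  let ⟨p, hp⟩ := h.exists_isPath
  ⟨p, hp, p.end_mem_support⟩

lemma TreeLe.trans (hT : T.IsAcyclic) (huv : TreeLe T r u v) (hvw : TreeLe T r v w) :
    TreeLe T r u w := by
  classical
  obtain ⟨p, hp, hv⟩ := hvw
  have hu := (treeLe_iff_mem_support hT (hp.takeUntil hv)).1 huv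
  exact ⟨p, hp, p.support_takeUntil_subset_support hv hu⟩

lemma eq_of_treeLe_root (hT : T.IsAcyclic) (h : TreeLe T r u r) : u = r := by
  simpa using (treeLe_iff_mem_support hT IsPath.nil).1 h

lemma treeLe_of_mem_support_dropUntil [DecidableEq V] {p : T.Walk r w} (hp : p.IsPath)
    (hu : u ∈ p.support) (hx : x ∈ (p.dropUntil u hu).support) : TreeLe T r u x := by
  have hprefix : ((p.takeUntil u hu).append ((p.dropUntil u hu).takeUntil x hx)).IsPath := by
    rw [← p.take_spec hu, ← (p.dropUntil u hu).take_spec hx, append_assoc] at hp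
    exact hp.of_append_left
  exact ⟨_, hprefix, (mem_support_append_iff _ _).2 (Or.inl (end_mem_support _))⟩

lemma dist_lt_dist_of_treeLe (hT : T.IsAcyclic) (h : TreeLe T r u v) (huv : u ≠ v) :
    T.dist r u < T.dist r v := by
  classical
  obtain ⟨p, hp, hu⟩ := h
  rw [← hT.length_eq_dist hp, ← hT.length_eq_dist (hp.takeUntil hu)]
  exact length_takeUntil_lt_length hu huv

lemma TreeLe.antisymm (hT : T.IsAcyclic) (huv : TreeLe T r u v) (hvu : TreeLe T r v u) :
    u = v := by
  by_contra h
  exact (dist_lt_dist_of_treeLe hT huv h).asymm (dist_lt_dist_of_treeLe hT hvu (Ne.symm h))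

lemma treeLe_total (hT : T.IsAcyclic) (hu : TreeLe T r u w) (hv : TreeLe T r v w) :
    TreeLe T r u v ∨ TreeLe T r v u := by
  classical
  obtain ⟨p, hp, hu⟩ := hu
  have hv := (treeLe_iff_mem_support hT hp).1 hv
  rw [← p.take_spec hu, mem_support_append_iff] at hv
  rcases hv with hv | hv
  · exact Or.inr ⟨_, hp.takeUntil hu, hv⟩
  · exact Or.inl (treeLe_of_mem_support_dropUntil hp hu hv)

lemma treeLe_or_treeLe_of_adj (hT : T.IsTree) (h : T.Adj u v) :
    TreeLe T r u v ∨ TreeLe T r v u := by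
  obtain ⟨p, hp⟩ := (hT.connected r u).exists_isPath
  obtain ⟨q, hq⟩ := (hT.connected r v).exists_isPath
  by_cases hu : u ∈ q.support
  · exact Or.inl ⟨q, hq, hu⟩
  · exact Or.inr
      ⟨p, hp, hT.isAcyclic.mem_support_of_ne_mem_support_of_adj_of_isPath hp hq h hu⟩

lemma treeLe_iff_of_adj (hT : T.IsAcyclic) (hadj : T.Adj v w) (hvw : TreeLe T r v w) :
    TreeLe T r u w ↔ u = w ∨ TreeLe T r u v := by
  classical
  obtain ⟨q, hq, hv⟩ := hvw
  have hcat : u ∈ q.support ↔ u ∈ ((q.takeUntil v hv).concat hadj).support := by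
    rw [← hT.path_concat (hq.takeUntil hv) hq hadj hv]
  rw [treeLe_iff_mem_support hT hq, treeLe_iff_mem_support hT (hq.takeUntil hv), hcat,
    support_concat, List.mem_append, List.mem_singleton, or_comm]

end TreeOrder

section Subtree

variable {V : Type*} {T : SimpleGraph V} {S : Set V} {r t u v x : V}

lemma SimpleGraph.IsAcyclic.support_subset_of_connected_induce (hT : T.IsAcyclic)
    (hS : (T.induce S).Connected) {p : T.Walk u v} (hp : p.IsPath) (hu : u ∈ S) (hv : v ∈ S) :
    ∀ y ∈ p.support, y ∈ S := by
  classical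
  obtain ⟨W⟩ := hS.preconnected ⟨u, hu⟩ ⟨v, hv⟩
  have hW : ∀ y ∈ (W.map (Embedding.induce S).toHom).support, y ∈ S := by
    simp only [Walk.support_map, List.mem_map]
    rintro _ ⟨⟨y, hy⟩, -, rfl⟩
    exact hy
  rw [hT.eq_of_isPath hp (W.map (Embedding.induce S).toHom).bypass_isPath]
  exact fun y hy => hW y (support_bypass_subset_support _ hy)

lemma mem_of_treeLe_of_connected_induce (hT : T.IsAcyclic) (hS : (T.induce S).Connected)
    (hu : u ∈ S) (hv : v ∈ S) (hux : TreeLe T r u x) (hxv : TreeLe T r x v) : x ∈ S := by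
  classical
  obtain ⟨p, hp, hx⟩ := hxv
  have hu' := (treeLe_iff_mem_support hT hp).1 (hux.trans hT ⟨p, hp, hx⟩)
  rw [← p.take_spec hu', mem_support_append_iff] at hx
  rcases hx with hx | hx
  · rwa [← hux.antisymm hT ⟨_, hp.takeUntil hu', hx⟩]
  · exact hT.support_subset_of_connected_induce hS (hp.dropUntil hu') hu hv x hx

lemma treeLe_of_walk_of_forall_dist_le (hT : T.IsTree) {a : V} (W : T.Walk a v)
    (hW : ∀ y ∈ W.support, y ∈ S) (hmin : ∀ y ∈ S, T.dist r t ≤ T.dist r y)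
    (hta : TreeLe T r t a) : TreeLe T r t v := by
  induction W with
  | nil => exact hta
  | @cons a c _ hac W ih =>
    refine ih (fun y hy => hW y (List.mem_cons_of_mem _ hy)) ?_
    rcases treeLe_or_treeLe_of_adj hT (r := r) hac with hle | hle
    · exact hta.trans hT.isAcyclic hle
    · rcases (treeLe_iff_of_adj hT.isAcyclic hac.symm hle).1 hta with rfl | htc
      · have hc : c ∈ S := hW c (List.mem_cons_of_mem _ W.start_mem_support)
        exact absurd (hmin c hc) (dist_lt_dist_of_treeLe hT.isAcyclic hle hac.ne').not_ge
      · exact htc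

lemma treeLe_of_connected_induce (hT : T.IsTree) (hS : (T.induce S).Connected) (ht : t ∈ S)
    (hmin : ∀ y ∈ S, T.dist r t ≤ T.dist r y) (hv : v ∈ S) : TreeLe T r t v := by
  obtain ⟨p, hp⟩ := (hT.connected t v).exists_isPath
  exact treeLe_of_walk_of_forall_dist_le hT p
    (hT.isAcyclic.support_subset_of_connected_induce hS hp ht hv) hmin
    (treeLe_refl (hT.connected r t))

end Subtree

section ParentGraph

variable {V : Type*} [Preorder V] {r u v w : V} {p : V → V}

def parentGraph (r : V) (p : V → V) : SimpleGraph V :=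
  SimpleGraph.fromRel fun v w => v ≠ r ∧ w = p v

lemma parentGraph_adj_parent (hp : ∀ v ≠ r, p v < v) (hv : v ≠ r) :
    (parentGraph r p).Adj v (p v) :=
  (fromRel_adj _ _ _).2 ⟨(hp v hv).ne', Or.inl ⟨hv, rfl⟩⟩

lemma eq_parent_or_lt_of_parentGraph_adj (hp : ∀ v ≠ r, p v < v)
    (h : (parentGraph r p).Adj v w) : w = p v ∨ v < w := by
  rcases ((fromRel_adj _ _ _).1 h).2 with ⟨-, hw⟩ | ⟨hw, rfl⟩
  · exact Or.inl hw
  · exact Or.inr (hp w hw)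

lemma parentGraph_connected [WellFoundedLT V] (hp : ∀ v ≠ r, p v < v) :
    (parentGraph r p).Connected := by
  have hreach : ∀ v, (parentGraph r p).Reachable v r := by
    intro v
    induction v using WellFoundedLT.induction with
    | _ v ih =>
      by_cases hv : v = r
      · rw [hv]
      · exact (parentGraph_adj_parent hp hv).reachable.trans (ih _ (hp v hv))
  have : Nonempty V := ⟨r⟩
  exact Connected.mk fun u v => (hreach u).trans (hreach v).symm

/-- A maximal vertex of a cycle has two neighbours on it, but only its parent can be one. -/
lemma parentGraph_isAcyclic (hp : ∀ v ≠ r, p v < v) : (parentGraph r p).IsAcyclic := by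
  classical
  intro v c hc
  obtain ⟨u, hu⟩ := c.support.toFinset.exists_maximal ⟨v, by simp⟩
  have hu_mem : u ∈ c.support := List.mem_toFinset.1 hu.prop
  have hnbr : c.toSubgraph.neighborSet u ⊆ {p u} := fun w hw =>
    (eq_parent_or_lt_of_parentGraph_adj hp (c.toSubgraph.adj_sub hw)).resolve_right
      (hu.not_gt (List.mem_toFinset.2 (c.mem_support_of_adj_toSubgraph hw.symm)))
  have := (Set.ncard_le_ncard hnbr (Set.finite_singleton _)).trans_eq (Set.ncard_singleton _)
  rw [hc.ncard_neighborSet_toSubgraph_eq_two hu_mem] at this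
  omega

lemma parentGraph_isTree [WellFoundedLT V] (hp : ∀ v ≠ r, p v < v) :
    (parentGraph r p).IsTree :=
  ⟨parentGraph_connected hp, parentGraph_isAcyclic hp⟩

lemma le_of_treeLe_parentGraph [WellFoundedLT V] (hp : ∀ v ≠ r, p v < v)
    (h : TreeLe (parentGraph r p) r u v) : u ≤ v := by
  have hT := parentGraph_isTree hp
  induction v using WellFoundedLT.induction generalizing u with
  | _ v ih =>
    obtain rfl | hv := eq_or_ne v r
    · rw [eq_of_treeLe_root hT.isAcyclic h]
    rcases treeLe_or_treeLe_of_adj hT (r := r) (parentGraph_adj_parent hp hv) with hle | hle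
    · exact absurd (ih _ (hp v hv) hle) (hp v hv).not_ge
    · rcases (treeLe_iff_of_adj hT.isAcyclic (parentGraph_adj_parent hp hv).symm hle).1 h
        with rfl | hu
      · exact le_rfl
      · exact (ih _ (hp v hv) hu).trans (hp v hv).le

lemma treeLe_parentGraph_iff [WellFoundedLT V] (hp : ∀ v ≠ r, p v < v) (hv : v ≠ r) :
    TreeLe (parentGraph r p) r u v ↔ u = v ∨ TreeLe (parentGraph r p) r u (p v) := by
  have hT := parentGraph_isTree hp
  have hadj := parentGraph_adj_parent hp hv
  refine treeLe_iff_of_adj hT.isAcyclic hadj.symm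
    ((treeLe_or_treeLe_of_adj hT hadj).resolve_left fun h => ?_)
  exact (hp v hv).not_ge (le_of_treeLe_parentGraph hp h)

end ParentGraph

section EliminationOrder

variable {V : Type*} [LinearOrder V] {H : SimpleGraph V} {r u v z : V} {p : V → V}

def lowerNeighborSet (H : SimpleGraph V) (v : V) : Set V := {u | H.Adj u v ∧ u < v}

/-- `p v` is the latest lower neighbour of `v`, or the least vertex `r` if there is none. -/
structure IsEliminationParent (H : SimpleGraph V) (r : V) (p : V → V) : Prop where
  isBot : IsBot r
  lt : ∀ v ≠ r, p v < v
  max_lowerNeighbor :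
    ∀ v, ∀ u ∈ lowerNeighborSet H v, p v ∈ lowerNeighborSet H v ∧ u ≤ p v

lemma exists_isEliminationParent [Finite V] [Nonempty V] (H : SimpleGraph V) :
    ∃ r p, IsEliminationParent H r p := by
  obtain ⟨r, hr⟩ := Finite.exists_min (id : V → V)
  have hparent : ∀ v, ∃ q, (v ≠ r → q < v) ∧
      ∀ u ∈ lowerNeighborSet H v, q ∈ lowerNeighborSet H v ∧ u ≤ q := by
    intro v
    rcases (lowerNeighborSet H v).eq_empty_or_nonempty with hN | hN
    · exact ⟨r, fun hv => (hr v).lt_of_ne hv.symm, by simp [hN]⟩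
    · obtain ⟨q, hq, hqmax⟩ := Set.exists_max_image _ id (Set.toFinite _) hN
      exact ⟨q, fun _ => hq.2, fun u hu => ⟨hq, hqmax u hu⟩⟩
  choose p hp using hparent
  exact ⟨r, p, hr, fun v => (hp v).1, fun v => (hp v).2⟩

namespace IsEliminationParent

variable [WellFoundedLT V]

lemma treeLe_of_mem_lowerNeighborSet (hp : IsEliminationParent H r p)
    (hH : ∀ v, H.IsClique (lowerNeighborSet H v)) (hu : u ∈ lowerNeighborSet H v) :
    TreeLe (parentGraph r p) r u v := by
  have hT := parentGraph_isTree hp.lt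
  induction v using WellFoundedLT.induction generalizing u with
  | _ v ih =>
    have hv : v ≠ r := fun hv => (hp.isBot u).not_gt (hv ▸ hu.2)
    obtain ⟨hpv, hup⟩ := hp.max_lowerNeighbor v u hu
    refine (treeLe_parentGraph_iff hp.lt hv).2 (Or.inr ?_)
    rcases hup.lt_or_eq with hup | rfl
    · exact ih _ hpv.2 ⟨hH v hu hpv hup.ne, hup⟩
    · exact treeLe_refl (hT.connected r _)

lemma isNormalTreeFor (hp : IsEliminationParent H r p)
    (hH : ∀ v, H.IsClique (lowerNeighborSet H v)) : IsNormalTreeFor H (parentGraph r p) r := by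
  refine ⟨parentGraph_isTree hp.lt, fun u v huv => ?_⟩
  rcases huv.ne.lt_or_gt with h | h
  · exact Or.inl (hp.treeLe_of_mem_lowerNeighborSet hH ⟨huv, h⟩)
  · exact Or.inr (hp.treeLe_of_mem_lowerNeighborSet hH ⟨huv.symm, h⟩)

/-- Induction on the far end `z` of the edge `uz`: for `z ≠ v`, the clique condition makes `u` a
lower neighbour of the parent of `z`. -/
lemma activeAncestors_subset (hp : IsEliminationParent H r p)
    (hH : ∀ v, H.IsClique (lowerNeighborSet H v)) (v : V) :
    activeAncestors H (parentGraph r p) r v ⊆ lowerNeighborSet H v := by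
  have hT := parentGraph_isTree hp.lt
  have hle {u v} := le_of_treeLe_parentGraph (u := u) (v := v) hp.lt
  rintro u ⟨huv, hu, z, hvz, hadj⟩
  induction z using WellFoundedLT.induction with
  | _ z ih =>
    obtain rfl | hzv := eq_or_ne z v
    · exact ⟨hadj, (hle hu).lt_of_ne huv⟩
    have hz : z ≠ r := fun hz => hzv (eq_of_treeLe_root hT.isAcyclic (hz ▸ hvz)).symm
    have hvpz := ((treeLe_parentGraph_iff hp.lt hz).1 hvz).resolve_left hzv.symm
    have huz : u ∈ lowerNeighborSet H z :=
      ⟨hadj, (hle hu).trans_lt ((hle hvz).lt_of_ne hzv.symm)⟩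
    obtain ⟨hpz, hupz⟩ := hp.max_lowerNeighbor z u huz
    have hne : u ≠ p z := fun h => huv ((hle hu).antisymm (h ▸ hle hvpz))
    exact ih _ (hp.lt z hz) hvpz (hH z huz hpz hne)

end IsEliminationParent

end EliminationOrder

section NormalTreeDecomposition

variable {V : Type*} {G H T : SimpleGraph V} {r : V}

lemma IsNormalTreeFor.mono (hGH : G ≤ H) (hT : IsNormalTreeFor H T r) :
    IsNormalTreeFor G T r :=
  ⟨hT.1, fun _ _ huv => hT.2 (hGH huv)⟩

lemma activeAncestors_mono (hGH : G ≤ H) (v : V) :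
    activeAncestors G T r v ⊆ activeAncestors H T r v :=
  fun _ ⟨huv, hu, z, hvz, hadj⟩ => ⟨huv, hu, z, hvz, hGH hadj⟩

lemma isTreeDecomp_comap {ι : Type*} {m : ℕ} (e : Fin m ≃ ι) {D : SimpleGraph ι}
    {bag : ι → Set V} (hD : D.IsTree) (hcover : ∀ v, ∃ i, v ∈ bag i)
    (hedge : ∀ ⦃u v⦄, G.Adj u v → ∃ i, u ∈ bag i ∧ v ∈ bag i)
    (hconn : ∀ v, (D.induce {i | v ∈ bag i}).Connected) :
    IsTreeDecomp G (D.comap e) (bag ∘ e) := by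
  refine ⟨(Iso.comap e D).isTree_iff.2 hD, fun v => ?_, fun u v huv => ?_, fun v => ?_⟩
  · obtain ⟨i, hi⟩ := hcover v
    exact ⟨e.symm i, by simpa using hi⟩
  · obtain ⟨i, hu, hv⟩ := hedge huv
    exact ⟨e.symm i, by simpa using hu, by simpa using hv⟩
  · exact (((Iso.comap e D).induce (e.bijOn fun _ => Iff.rfl)).connected_iff).2 (hconn v)

lemma connected_induce_setOf_mem_insert_activeAncestors (hT : T.IsTree) (v : V) :
    (T.induce {w | v ∈ insert w (activeAncestors G T r w)}).Connected := by
  classical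
  refine induce_connected_of_patches v (Set.mem_insert _ _) fun {w} hw => ?_
  obtain ⟨p, hp, hv⟩ : TreeLe T r v w := by
    rcases hw with rfl | hw
    · exact treeLe_refl (hT.connected r _)
    · exact hw.2.1
  refine ⟨{x | x ∈ (p.dropUntil v hv).support}, fun x hx => ?_, start_mem_support _,
    end_mem_support _, (connected_induce_support _).preconnected _ _⟩
  have hvx := treeLe_of_mem_support_dropUntil hp hv hx
  have hxw : TreeLe T r x w := ⟨p, hp, support_dropUntil_subset_support _ _ hx⟩
  obtain rfl | hxv := eq_or_ne x v
  · exact Set.mem_insert _ _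
  rcases hw with rfl | ⟨-, -, z, hwz, hadj⟩
  · exact absurd (hvx.antisymm hT.isAcyclic hxw) hxv.symm
  · exact Or.inr ⟨hxv.symm, hvx, z, hxw.trans hT.isAcyclic hwz, hadj⟩

theorem treewidth_le_of_isNormalTreeFor [Finite V] (hT : IsNormalTreeFor G T r) :
    treewidth G ≤ ⨆ v, (activeAncestors G T r v).ncard := by
  obtain ⟨n, ⟨e⟩⟩ := Finite.exists_equiv_fin V
  have hedge : ∀ ⦃u v⦄, G.Adj u v → ∃ w, u ∈ insert w (activeAncestors G T r w) ∧
      v ∈ insert w (activeAncestors G T r w) := by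
    intro u v huv
    rcases hT.2 huv with h | h
    · exact ⟨v, Or.inr ⟨huv.ne, h, v, treeLe_refl (hT.1.connected r v), huv⟩,
        Set.mem_insert _ _⟩
    · exact ⟨u, Set.mem_insert _ _,
        Or.inr ⟨huv.ne.symm, h, u, treeLe_refl (hT.1.connected r u), huv.symm⟩⟩
  refine treewidth_le_of_isTreeDecomp (isTreeDecomp_comap e.symm hT.1
    (fun v => ⟨v, Set.mem_insert _ _⟩) hedge
    (connected_induce_setOf_mem_insert_activeAncestors hT.1)) fun i => ?_
  exact (Set.ncard_insert_le _ _).trans (Nat.add_le_add_right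
    (le_ciSup (f := fun v => (activeAncestors G T r v).ncard) (Set.finite_range _).bddAbove _) 1)

end NormalTreeDecomposition

section TreeDecompositionToNormalTree

variable {V ι : Type*} {G : SimpleGraph V} {bag : ι → Set V}

def bagGraph (bag : ι → Set V) : SimpleGraph V where
  Adj u v := u ≠ v ∧ ∃ i, u ∈ bag i ∧ v ∈ bag i
  symm := ⟨fun _ _ ⟨huv, i, hu, hv⟩ => ⟨huv.symm, i, hv, hu⟩⟩
  loopless := ⟨fun _ h => h.1 rfl⟩

lemma bagGraph_adj {u v : V} :
    (bagGraph bag).Adj u v ↔ u ≠ v ∧ ∃ i, u ∈ bag i ∧ v ∈ bag i :=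
  Iff.rfl

lemma le_bagGraph (hedge : ∀ ⦃u v⦄, G.Adj u v → ∃ i, u ∈ bag i ∧ v ∈ bag i) :
    G ≤ bagGraph bag :=
  fun _ _ huv => bagGraph_adj.2 ⟨huv.ne, hedge huv⟩

lemma mem_bag_of_dist_le_dist {D : SimpleGraph ι} (hD : D.IsTree)
    (hconn : ∀ v, (D.induce {i | v ∈ bag i}).Connected) {i₀ : ι} {t : V → ι}
    (ht : ∀ v, v ∈ bag (t v))
    (hmin : ∀ v i, v ∈ bag i → D.dist i₀ (t v) ≤ D.dist i₀ i)
    {u v : V} {i : ι} (hu : u ∈ bag i) (hv : v ∈ bag i)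
    (hd : D.dist i₀ (t u) ≤ D.dist i₀ (t v)) : u ∈ bag (t v) := by
  have htop : ∀ w, ∀ j, w ∈ bag j → TreeLe D i₀ (t w) j := fun w _ hj =>
    treeLe_of_connected_induce hD (hconn w) (ht w) (hmin w) hj
  rcases treeLe_total hD.isAcyclic (htop u i hu) (htop v i hv) with h | h
  · exact mem_of_treeLe_of_connected_induce (S := {j | u ∈ bag j}) hD.isAcyclic (hconn u)
      (ht u) hu h (htop v i hv)
  · obtain heq | hne := eq_or_ne (t v) (t u)
    · exact heq ▸ ht u
    · exact absurd hd (dist_lt_dist_of_treeLe hD.isAcyclic h hne).not_ge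

theorem exists_isNormalTreeFor_of_isTreeDecomp [Finite V] [Nonempty V] {m k : ℕ}
    {D : SimpleGraph (Fin m)} {bag : Fin m → Set V} (hD : IsTreeDecomp G D bag)
    (hk : ∀ i, (bag i).ncard ≤ k + 1) :
    ∃ T r, IsNormalTreeFor G T r ∧ ⨆ v, (activeAncestors G T r v).ncard ≤ k := by
  obtain ⟨hDt, hcover, hedge, hconn⟩ := hD
  have : Nonempty (Fin m) := hDt.connected.nonempty
  let i₀ : Fin m := Classical.arbitrary _
  choose t ht hmin using fun v =>
    Set.exists_min_image {i | v ∈ bag i} (D.dist i₀) (Set.toFinite _) (hcover v)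
  obtain ⟨n, ⟨e⟩⟩ := Finite.exists_equiv_fin V
  let _ : LinearOrder V := LinearOrder.lift' (fun v => toLex (D.dist i₀ (t v), e v))
    fun u v h => e.injective (Prod.ext_iff.1 (toLex.injective h)).2
  have hlower : ∀ v, lowerNeighborSet (bagGraph bag) v ⊆ bag (t v) := by
    rintro v u ⟨hadj, huv⟩
    obtain ⟨-, i, hu, hv⟩ := bagGraph_adj.1 hadj
    exact mem_bag_of_dist_le_dist hDt hconn ht hmin hu hv (Prod.Lex.monotone_fst _ _ huv.le)
  have hclique : ∀ v, (bagGraph bag).IsClique (lowerNeighborSet (bagGraph bag) v) :=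
    fun v u hu w hw huw => bagGraph_adj.2 ⟨huw, t v, hlower v hu, hlower v hw⟩
  obtain ⟨r, p, hp⟩ := exists_isEliminationParent (bagGraph bag)
  refine ⟨parentGraph r p, r, (hp.isNormalTreeFor hclique).mono (le_bagGraph hedge),
    ciSup_le fun v => ?_⟩
  have hsub : insert v (activeAncestors G (parentGraph r p) r v) ⊆ bag (t v) :=
    Set.insert_subset (ht v) ((activeAncestors_mono (le_bagGraph hedge) v).trans
      ((hp.activeAncestors_subset hclique v).trans (hlower v)))
  have := (Set.ncard_le_ncard hsub (Set.toFinite _)).trans (hk (t v))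
  rwa [Set.ncard_insert_of_notMem (fun h => h.1 rfl) (Set.toFinite _),
    add_le_add_iff_right] at this

end TreeDecompositionToNormalTree

/-- Kloks' characterisation: the treewidth of `G` equals the minimum, over all
normal trees `T` for `G`, of `max_v a_T(v)`. -/
theorem treewidth_eq_min_normal_tree {V : Type*} [Fintype V] (G : SimpleGraph V) :
    treewidth G = sInf {w | ∃ (T : SimpleGraph V) (r : V),
      IsNormalTreeFor G T r ∧ w = ⨆ v : V, (activeAncestors G T r v).ncard} := by
  cases isEmpty_or_nonempty V
  · simp only [IsEmpty.exists_iff, exists_const, Set.ofPred_false, Nat.sInf_empty]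
    exact Nat.eq_zero_of_le_zero (treewidth_le_of_isTreeDecomp (isTreeDecomp_univ G) (by simp))
  obtain ⟨m, D, bag, hD, hk⟩ := exists_isTreeDecomp_ncard_le_treewidth G
  obtain ⟨T, r, hT, hw⟩ := exists_isNormalTreeFor_of_isTreeDecomp hD hk
  apply le_antisymm
  · refine le_csInf ⟨_, T, r, hT, rfl⟩ ?_
    rintro _ ⟨T', r', hT', rfl⟩
    exact treewidth_le_of_isNormalTreeFor hT'
  · exact le_trans (Nat.sInf_le ⟨T, r, hT, rfl⟩) hw
end
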